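/- arXiv:2012.08507 — 9 statements merged into one kernel-verified Lean document; each statement's English description precedes it below -/
import Mathlib

section
/- Deterministic self-normalized decomposition: for any λ > 0, any vectors x_1, …, x_t ∈ ℝ^d, and any reals η_1, …, η_t, one has ‖d_t‖²_{Z_t^{-1}} ≤ ∑_{i=1}^t [2 η_i x_iᵀ Z_{i-1}^{-1} d_{i-1} / (1 + w_i²)] + ∑_{i=1}^t [η_i² w_i² / (1 + w_i²)]. -/
/-!
The Sherman–Morrison formula makes the quadratic form of `Z_i⁻¹` explicit in terms of that of
`Z_{i-1}⁻¹`: with `a = x_iᵀ Z_{i-1}⁻¹ d_{i-1}`,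
`‖d_i‖²_{Z_i⁻¹} = ‖d_{i-1}‖²_{Z_{i-1}⁻¹} + (2 η_i a + η_i² w_i² - a²) / (1 + w_i²)`.
Dropping `-a² / (1 + w_i²)` and telescoping over `i` gives the bound.
-/

open Matrix Finset

/-- `√(vᵀ A v)`, the (semi-)norm of `v` induced by a positive definite matrix `A`. -/
noncomputable def matNorm {d : ℕ} (A : Matrix (Fin d) (Fin d) ℝ) (v : Fin d → ℝ) : ℝ :=
  Real.sqrt (v ⬝ᵥ (A *ᵥ v))

/-- The regularized Gram matrix `Z_t = λ I + ∑_{i=1}^t x_i x_iᵀ`. -/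
noncomputable def gramZ {d : ℕ} (lam : ℝ) (x : ℕ → Fin d → ℝ) (t : ℕ) :
    Matrix (Fin d) (Fin d) ℝ :=
  lam • (1 : Matrix (Fin d) (Fin d) ℝ) + ∑ i ∈ Finset.Icc 1 t, vecMulVec (x i) (x i)

/-- `d_t = ∑_{i=1}^t η_i x_i`. -/
noncomputable def dVec {d : ℕ} (x : ℕ → Fin d → ℝ) (η : ℕ → ℝ) (t : ℕ) : Fin d → ℝ :=
  ∑ i ∈ Finset.Icc 1 t, η i • x i

section QuadraticFormUpdate

variable {n : Type*} [Fintype n]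

theorem Matrix.IsSymm.dotProduct_mulVec_comm {K : Type*} [CommRing K] {A : Matrix n n K}
    (hA : A.IsSymm) (u v : n → K) : u ⬝ᵥ A *ᵥ v = v ⬝ᵥ A *ᵥ u := by
  rw [dotProduct_mulVec, ← mulVec_transpose, hA.eq, dotProduct_comm]

theorem Matrix.PosDef.add_vecMulVec_self {Z : Matrix n n ℝ} (hZ : Z.PosDef) (x : n → ℝ) :
    (Z + vecMulVec x x).PosDef := by
  simpa using hZ.add_posSemidef (posSemidef_vecMulVec_self_star x)

variable [DecidableEq n]

/-- Sherman–Morrison on quadratic forms. -/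
theorem Matrix.one_add_mul_sub_dotProduct_inv_add_vecMulVec {K : Type*} [Field K]
    {Z : Matrix n n K} {x : n → K} (hsymm : Z.IsSymm) (hZ : IsUnit Z.det)
    (hZx : IsUnit (Z + vecMulVec x x).det) (v : n → K) :
    (1 + x ⬝ᵥ Z⁻¹ *ᵥ x) * (v ⬝ᵥ Z⁻¹ *ᵥ v - v ⬝ᵥ (Z + vecMulVec x x)⁻¹ *ᵥ v) =
      (x ⬝ᵥ Z⁻¹ *ᵥ v) ^ 2 := by
  set u := (Z + vecMulVec x x)⁻¹ *ᵥ v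
  have hv : Z *ᵥ u + (x ⬝ᵥ u) • x = v := by
    rw [← op_smul_eq_smul, ← vecMulVec_mulVec, ← add_mulVec, mulVec_mulVec,
      mul_nonsing_inv _ hZx, one_mulVec]
  have hZv : Z⁻¹ *ᵥ v = u + (x ⬝ᵥ u) • Z⁻¹ *ᵥ x := by
    rw [← hv, mulVec_add, mulVec_mulVec, nonsing_inv_mul _ hZ, one_mulVec, mulVec_smul]
  have hx : x ⬝ᵥ Z⁻¹ *ᵥ v = (1 + x ⬝ᵥ Z⁻¹ *ᵥ x) * (x ⬝ᵥ u) := by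
    rw [hZv, dotProduct_add, dotProduct_smul, smul_eq_mul]
    ring
  have hvv : v ⬝ᵥ Z⁻¹ *ᵥ v = v ⬝ᵥ u + (x ⬝ᵥ u) * (v ⬝ᵥ Z⁻¹ *ᵥ x) := by
    rw [hZv, dotProduct_add, dotProduct_smul, smul_eq_mul]
  rw [hvv, hsymm.inv.dotProduct_mulVec_comm v x, hx]
  ring

theorem Matrix.PosDef.dotProduct_inv_add_vecMulVec_add_smul_le {Z : Matrix n n ℝ}
    (hZ : Z.PosDef) (x v : n → ℝ) (η : ℝ) :
    (v + η • x) ⬝ᵥ (Z + vecMulVec x x)⁻¹ *ᵥ (v + η • x) ≤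
      v ⬝ᵥ Z⁻¹ *ᵥ v + 2 * η * (x ⬝ᵥ Z⁻¹ *ᵥ v) / (1 + x ⬝ᵥ Z⁻¹ *ᵥ x) +
        η ^ 2 * (x ⬝ᵥ Z⁻¹ *ᵥ x) / (1 + x ⬝ᵥ Z⁻¹ *ᵥ x) := by
  have hsymm : Z.IsSymm := isHermitian_iff_isSymm.mp hZ.isHermitian
  have hupdate := one_add_mul_sub_dotProduct_inv_add_vecMulVec hsymm
    ((isUnit_iff_isUnit_det Z).mp hZ.isUnit)
    ((isUnit_iff_isUnit_det _).mp (hZ.add_vecMulVec_self x).isUnit) (v + η • x)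
  have hw : 0 ≤ x ⬝ᵥ Z⁻¹ *ᵥ x := by
    simpa using hZ.inv.posSemidef.dotProduct_mulVec_nonneg x
  have hquad : (v + η • x) ⬝ᵥ Z⁻¹ *ᵥ (v + η • x) =
      v ⬝ᵥ Z⁻¹ *ᵥ v + 2 * η * (x ⬝ᵥ Z⁻¹ *ᵥ v) + η ^ 2 * (x ⬝ᵥ Z⁻¹ *ᵥ x) := by
    simp only [mulVec_add, mulVec_smul, dotProduct_add, add_dotProduct, dotProduct_smul,
      smul_dotProduct, smul_eq_mul, hsymm.inv.dotProduct_mulVec_comm v x]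
    ring
  have hlin : x ⬝ᵥ Z⁻¹ *ᵥ (v + η • x) = x ⬝ᵥ Z⁻¹ *ᵥ v + η * (x ⬝ᵥ Z⁻¹ *ᵥ x) := by
    rw [mulVec_add, mulVec_smul, dotProduct_add, dotProduct_smul, smul_eq_mul]
  rw [hquad, hlin] at hupdate
  rw [add_assoc, ← add_div, ← sub_le_iff_le_add', le_div_iff₀ (by linarith)]
  linear_combination sq_nonneg (x ⬝ᵥ Z⁻¹ *ᵥ v) - hupdate

end QuadraticFormUpdate

section GramMatrix

variable {d : ℕ} (x : ℕ → Fin d → ℝ)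

theorem gramZ_succ (lam : ℝ) (t : ℕ) :
    gramZ lam x (t + 1) = gramZ lam x t + vecMulVec (x (t + 1)) (x (t + 1)) := by
  rw [gramZ, gramZ, sum_Icc_succ_top (by omega), add_assoc]

theorem dVec_succ (η : ℕ → ℝ) (t : ℕ) :
    dVec x η (t + 1) = dVec x η t + η (t + 1) • x (t + 1) := by
  rw [dVec, dVec, sum_Icc_succ_top (by omega)]

theorem gramZ_posDef {lam : ℝ} (hlam : 0 < lam) (t : ℕ) : (gramZ lam x t).PosDef := by
  induction t with
  | zero => simpa [gramZ] using PosDef.one.smul hlam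
  | succ t ih => simpa only [gramZ_succ] using ih.add_vecMulVec_self (x (t + 1))

end GramMatrix

theorem matNorm_sq {d : ℕ} {A : Matrix (Fin d) (Fin d) ℝ} (hA : A.PosSemidef) (v : Fin d → ℝ) :
    matNorm A v ^ 2 = v ⬝ᵥ A *ᵥ v := by
  simpa [matNorm] using Real.sq_sqrt (hA.dotProduct_mulVec_nonneg v)

/-- Deterministic self-normalized decomposition:
`‖d_t‖²_{Z_t^{-1}} ≤ ∑_{i=1}^t 2η_i x_iᵀ Z_{i-1}^{-1} d_{i-1}/(1+w_i²) + ∑_{i=1}^t η_i² w_i²/(1+w_i²)`. -/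
theorem statement3 {d : ℕ} (lam : ℝ) (hlam : 0 < lam) (t : ℕ)
    (x : ℕ → Fin d → ℝ) (η : ℕ → ℝ) :
    dVec x η t ⬝ᵥ ((gramZ lam x t)⁻¹ *ᵥ dVec x η t) ≤
      (∑ i ∈ Finset.Icc 1 t,
          2 * η i * (x i ⬝ᵥ ((gramZ lam x (i - 1))⁻¹ *ᵥ dVec x η (i - 1))) /
            (1 + matNorm ((gramZ lam x (i - 1))⁻¹) (x i) ^ 2)) +
        ∑ i ∈ Finset.Icc 1 t,
          η i ^ 2 * matNorm ((gramZ lam x (i - 1))⁻¹) (x i) ^ 2 /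
            (1 + matNorm ((gramZ lam x (i - 1))⁻¹) (x i) ^ 2) := by
  induction t with
  | zero => simp [dVec]
  | succ t ih =>
    have hstep := (gramZ_posDef x hlam t).dotProduct_inv_add_vecMulVec_add_smul_le
      (x (t + 1)) (dVec x η t) (η (t + 1))
    rw [dVec_succ, gramZ_succ, sum_Icc_succ_top (by omega), sum_Icc_succ_top (by omega),
      Nat.add_sub_cancel, matNorm_sq (gramZ_posDef x hlam t).inv.posSemidef]
    linarith
end

section
/- Deterministic weighted regret summation bound: if for every t ∈ [T] one has 0 ≤ r_t ≤ 2 and r_t ≤ 2α σ̄_t ‖a_t/σ̄_t‖_{A_{t-1}^{-1}}, then ∑_{t=1}^T r_t ≤ 4d·log(1 + TL²/(dλ)) + 2α·√(2d·log(1 + TL²/(dλ))) · √(∑_{t=1}^T σ̄_t²). -/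
open Matrix Finset

/-- The weighted Gram matrix `A_t = λ I + ∑_{i=1}^t σ̄_i^{-2} a_i a_iᵀ`. -/
noncomputable def wGram {d : ℕ} (lam : ℝ) (a : ℕ → Fin d → ℝ) (sb : ℕ → ℝ) (t : ℕ) :
    Matrix (Fin d) (Fin d) ℝ :=
  lam • (1 : Matrix (Fin d) (Fin d) ℝ) +
    ∑ i ∈ Finset.Icc 1 t, ((sb i) ^ 2)⁻¹ • vecMulVec (a i) (a i)

/-!
Write `x_t = a_t / σ̄_t` and `u_t = ‖x_t‖²_{A_{t-1}⁻¹}`. Each term satisfies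
`r_t ≤ 2 min(1, u_t) + 2α |σ̄_t| √(min(1, u_t))`, using `r_t ≤ 2` when `u_t ≥ 1`.
By the matrix determinant lemma `det A_T = λ^d ∏ (1 + u_t)`, while AM-GM on the eigenvalues
gives `det A_T ≤ (tr A_T / d)^d ≤ (λ + T L² / d)^d`; hence
`∑ log (1 + u_t) ≤ d log (1 + T L² / (d λ))`, and `min(1, u) ≤ 2 log (1 + u)` turns this
into the elliptical potential bound on `∑ min(1, u_t)`.
Cauchy-Schwarz against `∑ σ̄_t²` handles the second term.
-/

theorem Real.prod_le_sum_div_card_pow {ι : Type*} (s : Finset ι) (z : ι → ℝ)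
    (hz : ∀ i ∈ s, 0 ≤ z i) : ∏ i ∈ s, z i ≤ ((∑ i ∈ s, z i) / #s) ^ #s := by
  rcases s.eq_empty_or_nonempty with rfl | hs
  · simp
  have hcard : (0 : ℝ) < #s := by exact_mod_cast hs.card_pos
  have amgm : ∏ i ∈ s, z i ^ (#s : ℝ)⁻¹ ≤ ∑ i ∈ s, (#s : ℝ)⁻¹ * z i :=
    Real.geom_mean_le_arith_mean_weighted s _ z (fun _ _ => by positivity)
      (by simp [hcard.ne']) hz
  calc ∏ i ∈ s, z i = (∏ i ∈ s, z i ^ (#s : ℝ)⁻¹) ^ #s := by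
        rw [← prod_pow]
        refine prod_congr rfl fun i hi => ?_
        rw [← Real.rpow_natCast, ← Real.rpow_mul (hz i hi), inv_mul_cancel₀ hcard.ne',
          Real.rpow_one]
    _ ≤ (∑ i ∈ s, (#s : ℝ)⁻¹ * z i) ^ #s :=
        pow_le_pow_left₀ (prod_nonneg fun i hi => Real.rpow_nonneg (hz i hi) _) amgm _
    _ = ((∑ i ∈ s, z i) / #s) ^ #s := by rw [← mul_sum, inv_mul_eq_div]

theorem Matrix.PosSemidef.det_le_trace_div_card_pow {n : Type*} [Fintype n] [DecidableEq n]
    {A : Matrix n n ℝ} (hA : A.PosSemidef) :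
    A.det ≤ (A.trace / Fintype.card n) ^ Fintype.card n := by
  rw [hA.isHermitian.det_eq_prod_eigenvalues, hA.isHermitian.trace_eq_sum_eigenvalues]
  simpa using Real.prod_le_sum_div_card_pow univ _ fun i _ => hA.eigenvalues_nonneg i

theorem Matrix.det_add_vecMulVec {n R : Type*} [Fintype n] [DecidableEq n] [CommRing R]
    {A : Matrix n n R} (hA : IsUnit A.det) (u v : n → R) :
    (A + vecMulVec u v).det = A.det * (1 + v ⬝ᵥ (A⁻¹ *ᵥ u)) := by
  rw [vecMulVec_eq Unit, det_add_replicateCol_mul_replicateRow hA, Matrix.mul_assoc,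
    ← replicateCol_mulVec, det_one_add_mul_comm, det_one_add_replicateCol_mul_replicateRow]

theorem Real.min_one_le_two_mul_log_one_add {u : ℝ} (hu : 0 ≤ u) :
    min 1 u ≤ 2 * Real.log (1 + u) := by
  have hpos : 0 < 1 + u := by linarith
  have hlog : 1 - (1 + u)⁻¹ ≤ Real.log (1 + u) := Real.one_sub_inv_le_log_of_pos hpos
  have hmin : min 1 u * (1 + u) ≤ 2 * u := by
    rcases le_total u 1 with h | h
    · rw [min_eq_right h]; nlinarith
    · rw [min_eq_left h]; linarith
  have : 2 * (1 - (1 + u)⁻¹) = 2 * u / (1 + u) := by field_simp; ring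
  linarith [(le_div_iff₀ hpos).mpr hmin]

section RegGram

variable {n : Type*} [DecidableEq n]

noncomputable def regGram (lam : ℝ) (x : ℕ → n → ℝ) (t : ℕ) : Matrix n n ℝ :=
  lam • 1 + ∑ i ∈ Icc 1 t, vecMulVec (x i) (x i)

variable {lam : ℝ} (x : ℕ → n → ℝ)

theorem regGram_succ (t : ℕ) :
    regGram lam x (t + 1) = regGram lam x t + vecMulVec (x (t + 1)) (x (t + 1)) := by
  rw [regGram, regGram, sum_Icc_succ_top (by omega), add_assoc]

variable [Fintype n]

theorem regGram_posDef (hlam : 0 < lam) (t : ℕ) : (regGram lam x t).PosDef := by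
  refine PosDef.add_posSemidef ?_ (posSemidef_sum _ fun i _ => ?_)
  · rw [smul_one_eq_diagonal]
    exact PosDef.diagonal fun _ => hlam
  · simpa using posSemidef_vecMulVec_self_star (x i)

/-- `‖x_t‖²` in the norm of `A_{t-1}⁻¹`, where `A_t = regGram lam x t`. -/
noncomputable def invGramNormSq (lam : ℝ) (x : ℕ → n → ℝ) (t : ℕ) : ℝ :=
  x t ⬝ᵥ ((regGram lam x (t - 1))⁻¹ *ᵥ x t)

theorem invGramNormSq_nonneg (hlam : 0 < lam) (t : ℕ) : 0 ≤ invGramNormSq lam x t := by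
  simpa [invGramNormSq] using
    (regGram_posDef x hlam (t - 1)).posSemidef.inv.dotProduct_mulVec_nonneg (x t)

theorem det_regGram (hlam : 0 < lam) (t : ℕ) :
    (regGram lam x t).det =
      lam ^ Fintype.card n * ∏ i ∈ Icc 1 t, (1 + invGramNormSq lam x i) := by
  induction t with
  | zero => simp [regGram]
  | succ t ih =>
    have hunit := (isUnit_iff_isUnit_det _).mp (regGram_posDef x hlam t).isUnit
    rw [regGram_succ, det_add_vecMulVec hunit, prod_Icc_succ_top (by omega), ih,
      invGramNormSq, Nat.add_sub_cancel, mul_assoc]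

theorem trace_regGram (t : ℕ) :
    (regGram lam x t).trace = lam * Fintype.card n + ∑ i ∈ Icc 1 t, x i ⬝ᵥ x i := by
  simp [regGram, trace_sum, vecMulVec_eq Unit, trace_replicateCol_mul_replicateRow]

end RegGram

section EllipticalPotential

variable {n : Type*} [Fintype n] [DecidableEq n] {lam L : ℝ} {x : ℕ → n → ℝ} {T : ℕ}

theorem det_regGram_le (hlam : 0 < lam) (hx : ∀ t ∈ Icc 1 T, x t ⬝ᵥ x t ≤ L ^ 2) :
    (regGram lam x T).det ≤ (lam + T * L ^ 2 / Fintype.card n) ^ Fintype.card n := by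
  have hA := (regGram_posDef x hlam T).posSemidef
  refine hA.det_le_trace_div_card_pow.trans
    (pow_le_pow_left₀ (by positivity [hA.trace_nonneg]) ?_ _)
  have htrace : (regGram lam x T).trace ≤ lam * Fintype.card n + T * L ^ 2 := by
    rw [trace_regGram]
    simpa using sum_le_sum hx
  calc (regGram lam x T).trace / Fintype.card n
      ≤ (lam * Fintype.card n + T * L ^ 2) / Fintype.card n := by gcongr
    _ = lam * (Fintype.card n / Fintype.card n) + T * L ^ 2 / Fintype.card n := by ring
    _ ≤ lam + T * L ^ 2 / Fintype.card n := by
        gcongr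
        exact mul_le_of_le_one_right hlam.le (div_self_le_one _)

theorem sum_log_one_add_invGramNormSq_le (hlam : 0 < lam)
    (hx : ∀ t ∈ Icc 1 T, x t ⬝ᵥ x t ≤ L ^ 2) :
    ∑ t ∈ Icc 1 T, Real.log (1 + invGramNormSq lam x t) ≤
      Fintype.card n * Real.log (1 + T * L ^ 2 / (Fintype.card n * lam)) := by
  have hpos : ∀ t, 0 < 1 + invGramNormSq lam x t :=
    fun t => by linarith [invGramNormSq_nonneg x hlam t]
  have hlogdet : Real.log (regGram lam x T).det =
      Fintype.card n * Real.log lam + ∑ t ∈ Icc 1 T, Real.log (1 + invGramNormSq lam x t) := by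
    rw [det_regGram x hlam,
      Real.log_mul (by positivity) (prod_ne_zero_iff.mpr fun t _ => (hpos t).ne'), Real.log_pow,
      Real.log_prod fun t _ => (hpos t).ne']
  have hsplit : lam + T * L ^ 2 / Fintype.card n =
      lam * (1 + T * L ^ 2 / (Fintype.card n * lam)) := by
    field_simp
  have := Real.log_le_log (regGram_posDef x hlam T).det_pos (det_regGram_le hlam hx)
  rw [hlogdet, Real.log_pow, hsplit, Real.log_mul hlam.ne' (by positivity)] at this
  linarith

theorem sum_min_one_invGramNormSq_le (hlam : 0 < lam)
    (hx : ∀ t ∈ Icc 1 T, x t ⬝ᵥ x t ≤ L ^ 2) :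
    ∑ t ∈ Icc 1 T, min 1 (invGramNormSq lam x t) ≤
      2 * Fintype.card n * Real.log (1 + T * L ^ 2 / (Fintype.card n * lam)) :=
  calc ∑ t ∈ Icc 1 T, min 1 (invGramNormSq lam x t)
      ≤ ∑ t ∈ Icc 1 T, 2 * Real.log (1 + invGramNormSq lam x t) :=
        sum_le_sum fun t _ => Real.min_one_le_two_mul_log_one_add (invGramNormSq_nonneg x hlam t)
    _ ≤ 2 * Fintype.card n * Real.log (1 + T * L ^ 2 / (Fintype.card n * lam)) := by
        rw [← mul_sum, mul_assoc]
        gcongr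
        exact sum_log_one_add_invGramNormSq_le hlam hx

end EllipticalPotential

theorem le_two_mul_min_one_add_mul_sqrt {r c u : ℝ} (hr2 : r ≤ 2) (hc : 0 ≤ c) (hu : 0 ≤ u)
    (hr : r ≤ c * √u) : r ≤ 2 * min 1 u + c * √(min 1 u) := by
  rcases le_total 1 u with h | h
  · rw [min_eq_left h, Real.sqrt_one]
    linarith
  · rw [min_eq_right h]
    linarith

theorem wGram_eq_regGram {d : ℕ} (lam : ℝ) (a : ℕ → Fin d → ℝ) (sb : ℕ → ℝ) :
    wGram lam a sb = regGram lam (fun i => (sb i)⁻¹ • a i) := by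
  ext1 t
  refine congrArg (_ + ·) (sum_congr rfl fun i _ => ?_)
  rw [vecMulVec_smul, smul_vecMulVec, smul_smul, ← mul_inv, ← sq]

theorem matNorm_inv_wGram {d : ℕ} (lam : ℝ) (a : ℕ → Fin d → ℝ) (sb : ℕ → ℝ)
    (t : ℕ) :
    matNorm ((wGram lam a sb (t - 1))⁻¹) ((sb t)⁻¹ • a t) =
      √(invGramNormSq lam (fun i => (sb i)⁻¹ • a i) t) := by
  rw [matNorm, wGram_eq_regGram, invGramNormSq]

theorem statement5_general {d : ℕ} (lam α L : ℝ) (hlam : 0 < lam) (hα : 0 ≤ α)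
    (T : ℕ) (a : ℕ → Fin d → ℝ) (sb : ℕ → ℝ) (r : ℕ → ℝ)
    (haL : ∀ t ∈ Finset.Icc 1 T, Real.sqrt ((sb t)⁻¹ • a t ⬝ᵥ (sb t)⁻¹ • a t) ≤ L)
    (hr2 : ∀ t ∈ Finset.Icc 1 T, r t ≤ 2)
    (hrb : ∀ t ∈ Finset.Icc 1 T,
      r t ≤ 2 * α * sb t * matNorm ((wGram lam a sb (t - 1))⁻¹) ((sb t)⁻¹ • a t)) :
    ∑ t ∈ Finset.Icc 1 T, r t ≤
      4 * (d : ℝ) * Real.log (1 + (T : ℝ) * L ^ 2 / ((d : ℝ) * lam)) +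
        2 * α * Real.sqrt (2 * (d : ℝ) * Real.log (1 + (T : ℝ) * L ^ 2 / ((d : ℝ) * lam))) *
          Real.sqrt (∑ t ∈ Finset.Icc 1 T, (sb t) ^ 2) := by
  set x : ℕ → Fin d → ℝ := fun t => (sb t)⁻¹ • a t
  set m : ℕ → ℝ := fun t => min 1 (invGramNormSq lam x t)
  set K := 2 * (d : ℝ) * Real.log (1 + (T : ℝ) * L ^ 2 / ((d : ℝ) * lam))
  have hm : ∑ t ∈ Icc 1 T, m t ≤ K := by
    simpa using sum_min_one_invGramNormSq_le hlam fun t ht => (Real.sqrt_le_iff.mp (haL t ht)).2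
  have hm0 : ∀ t, 0 ≤ m t := fun t => le_min zero_le_one (invGramNormSq_nonneg x hlam t)
  have hpoint : ∀ t ∈ Icc 1 T, r t ≤ 2 * m t + 2 * α * |sb t| * √(m t) := fun t ht =>
    le_two_mul_min_one_add_mul_sqrt (hr2 t ht) (by positivity) (invGramNormSq_nonneg x hlam t) <|
      (hrb t ht).trans <| by
        rw [matNorm_inv_wGram]
        gcongr
        exact le_abs_self _
  have hcs : ∑ t ∈ Icc 1 T, |sb t| * √(m t) ≤ √(∑ t ∈ Icc 1 T, sb t ^ 2) * √K := by
    refine (Real.sum_mul_le_sqrt_mul_sqrt _ _ _).trans ?_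
    simp only [sq_abs, Real.sq_sqrt, hm0]
    gcongr
  calc ∑ t ∈ Icc 1 T, r t
      ≤ ∑ t ∈ Icc 1 T, (2 * m t + 2 * α * |sb t| * √(m t)) := sum_le_sum hpoint
    _ = 2 * ∑ t ∈ Icc 1 T, m t + 2 * α * ∑ t ∈ Icc 1 T, |sb t| * √(m t) := by
        simp only [sum_add_distrib, mul_sum, mul_assoc]
    _ ≤ 2 * K + 2 * α * (√(∑ t ∈ Icc 1 T, sb t ^ 2) * √K) := by gcongr
    _ = _ := by ring

/-- Deterministic weighted regret summation bound. -/
theorem statement5 {d : ℕ} (lam α L : ℝ) (hlam : 0 < lam) (hα : 0 ≤ α) (hL : 0 < L)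
    (T : ℕ) (hT : 1 ≤ T) (a : ℕ → Fin d → ℝ) (sb : ℕ → ℝ) (r : ℕ → ℝ)
    (hsb : ∀ t ∈ Finset.Icc 1 T, 0 < sb t)
    (haL : ∀ t ∈ Finset.Icc 1 T, Real.sqrt ((sb t)⁻¹ • a t ⬝ᵥ (sb t)⁻¹ • a t) ≤ L)
    (hr0 : ∀ t ∈ Finset.Icc 1 T, 0 ≤ r t)
    (hr2 : ∀ t ∈ Finset.Icc 1 T, r t ≤ 2)
    (hrb : ∀ t ∈ Finset.Icc 1 T,
      r t ≤ 2 * α * sb t * matNorm ((wGram lam a sb (t - 1))⁻¹) ((sb t)⁻¹ • a t)) :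
    ∑ t ∈ Finset.Icc 1 T, r t ≤
      4 * (d : ℝ) * Real.log (1 + (T : ℝ) * L ^ 2 / ((d : ℝ) * lam)) +
        2 * α * Real.sqrt (2 * (d : ℝ) * Real.log (1 + (T : ℝ) * L ^ 2 / ((d : ℝ) * lam))) *
          Real.sqrt (∑ t ∈ Finset.Icc 1 T, (sb t) ^ 2) :=
  statement5_general lam α L hlam hα T a sb r haL hr2 hrb
end

section
/- Estimated variance error bound: under the stated hypotheses, |clip_{[0,H²]}(⟨ψ, θ̃⟩) − ⟨ψ, θ*⟩ + ⟨φ, θ*⟩² − (clip_{[0,H]}(⟨φ, θ̂⟩))²| ≤ min{H², ‖Σ̃^{-1/2} ψ‖₂ · ‖Σ̃^{1/2}(θ̃ − θ*)‖₂} + min{H², 2H·‖Σ̂^{-1/2} φ‖₂ · ‖Σ̂^{1/2}(θ̂ − θ*)‖₂}. -/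
/-!
With `S = Σ^{1/2}` symmetric and invertible, `⟨w, θ - θ*⟩ = ⟨S⁻¹ w, S (θ - θ*)⟩`, so Cauchy–Schwarz
bounds each linear estimation error by the product of the two weighted norms. Clipping to an
interval that contains the true value moves the estimate towards it, and on `[0, H]` the map
`x ↦ x²` is `2H`-Lipschitz; both errors are also at most `H²`, as the compared values lie in
`[0, H²]`.
-/

open Matrix

open scoped ComplexOrder in
/-- The square root of a positive semidefinite matrix (the definition of `Matrix.PosSemidef.sqrt`
in the older Mathlib, which has since been removed). -/
noncomputable def Matrix.PosSemidef.sqrt {n 𝕜 : Type*} [Fintype n] [DecidableEq n] [RCLike 𝕜]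
    {A : Matrix n n 𝕜} (hA : A.PosSemidef) : Matrix n n 𝕜 :=
  hA.1.eigenvectorUnitary.1 * diagonal ((↑) ∘ Real.sqrt ∘ hA.1.eigenvalues) *
    (star hA.1.eigenvectorUnitary : Matrix n n 𝕜)

/-- Truncation of `x` to the interval `[a, b]`. -/
noncomputable def clip (a b x : ℝ) : ℝ := min (max x a) b

/-- The Euclidean norm `‖v‖₂ = √(v ⬝ᵥ v)`. -/
noncomputable def enorm2 {d : ℕ} (v : Fin d → ℝ) : ℝ := Real.sqrt (v ⬝ᵥ v)

lemma abs_dotProduct_le_enorm2_mul {d : ℕ} (u v : Fin d → ℝ) :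
    |u ⬝ᵥ v| ≤ enorm2 u * enorm2 v := by
  have hu : 0 ≤ u ⬝ᵥ u := Finset.sum_nonneg fun i _ => mul_self_nonneg _
  rw [enorm2, enorm2, ← Real.sqrt_mul hu, ← Real.sqrt_sq_eq_abs]
  apply Real.sqrt_le_sqrt
  simpa [dotProduct, sq] using Finset.sum_mul_sq_le_sq_mul_sq Finset.univ u v

namespace Matrix.PosSemidef

variable {n : Type*} [Fintype n] [DecidableEq n] {A : Matrix n n ℝ}

lemma transpose_sqrt (hA : A.PosSemidef) : hA.sqrtᵀ = hA.sqrt := by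
  simp only [sqrt, transpose_mul, star_eq_conjTranspose, conjTranspose_eq_transpose_of_trivial,
    transpose_transpose, diagonal_transpose, Matrix.mul_assoc]

lemma sqrt_mul_sqrt (hA : A.PosSemidef) : hA.sqrt * hA.sqrt = A := by
  have hD : diagonal ((RCLike.ofReal : ℝ → ℝ) ∘ Real.sqrt ∘ hA.1.eigenvalues) *
      diagonal ((RCLike.ofReal : ℝ → ℝ) ∘ Real.sqrt ∘ hA.1.eigenvalues) =
      diagonal (RCLike.ofReal ∘ hA.1.eigenvalues) := by
    rw [diagonal_mul_diagonal]
    congr 1; funext i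
    simp [Real.mul_self_sqrt (hA.eigenvalues_nonneg i)]
  have hU : (star hA.1.eigenvectorUnitary : Matrix n n ℝ) * hA.1.eigenvectorUnitary = 1 :=
    Unitary.star_mul_self_of_mem hA.1.eigenvectorUnitary.2
  conv_rhs => rw [hA.1.spectral_theorem, Unitary.conjStarAlgAut_apply, ← hD]
  simp only [sqrt, Matrix.mul_assoc]
  rw [← Matrix.mul_assoc (star _) _ (diagonal _ * _), hU, Matrix.one_mul]

end Matrix.PosSemidef

lemma Matrix.PosDef.isUnit_det_sqrt {n : Type*} [Fintype n] [DecidableEq n] {A : Matrix n n ℝ}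
    (hA : A.PosDef) : IsUnit hA.posSemidef.sqrt.det := by
  have hsq : hA.posSemidef.sqrt.det ^ 2 = A.det := by
    rw [sq, ← det_mul, hA.posSemidef.sqrt_mul_sqrt]
  exact isUnit_iff_ne_zero.2 fun h => hA.det_pos.ne' (by rw [← hsq, h, sq, mul_zero])

lemma dotProduct_eq_inv_mulVec_dotProduct_mulVec {n : Type*} [Fintype n] [DecidableEq n]
    {S : Matrix n n ℝ} (hS : Sᵀ = S) (hdet : IsUnit S.det) (w v : n → ℝ) :
    w ⬝ᵥ v = (S⁻¹ *ᵥ w) ⬝ᵥ (S *ᵥ v) := by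
  rw [dotProduct_mulVec, ← mulVec_transpose, hS, mulVec_mulVec, mul_nonsing_inv _ hdet,
    one_mulVec]

lemma abs_dotProduct_sub_le_of_posDef {d : ℕ} {A : Matrix (Fin d) (Fin d) ℝ} (hA : A.PosDef)
    (w θ θ' : Fin d → ℝ) :
    |w ⬝ᵥ θ - w ⬝ᵥ θ'| ≤
      enorm2 (hA.posSemidef.sqrt⁻¹ *ᵥ w) * enorm2 (hA.posSemidef.sqrt *ᵥ (θ - θ')) := by
  rw [← dotProduct_sub, dotProduct_eq_inv_mulVec_dotProduct_mulVec hA.posSemidef.transpose_sqrt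
    hA.isUnit_det_sqrt]
  exact abs_dotProduct_le_enorm2_mul _ _

lemma clip_mem_Icc {a b : ℝ} (hab : a ≤ b) (y : ℝ) : clip a b y ∈ Set.Icc a b :=
  ⟨le_min (le_max_right _ _) hab, min_le_right _ _⟩

lemma abs_clip_sub_le {a b x : ℝ} (hx : x ∈ Set.Icc a b) (y : ℝ) :
    |clip a b y - x| ≤ |y - x| :=
  calc |clip a b y - x| = |min (max y a) b - min (max x a) b| := by
        rw [max_eq_left hx.1, min_eq_left hx.2, clip]
    _ ≤ |max y a - max x a| := by simpa using abs_min_sub_min_le_max (max y a) b (max x a) b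
    _ ≤ |y - x| := abs_max_sub_max_le_abs y x a

lemma abs_clip_sub_le_min {b x : ℝ} (hx : x ∈ Set.Icc 0 b) (y : ℝ) :
    |clip 0 b y - x| ≤ min b |y - x| := by
  obtain ⟨hc0, hcb⟩ := clip_mem_Icc (hx.1.trans hx.2) y
  refine le_min ?_ (abs_clip_sub_le hx y)
  rw [abs_sub_le_iff]
  constructor <;> linarith [hx.1, hx.2]

lemma abs_sq_sub_sq_clip_le_min {H x : ℝ} (hx : x ∈ Set.Icc 0 H) (y : ℝ) :
    |x ^ 2 - clip 0 H y ^ 2| ≤ min (H ^ 2) (2 * H * |y - x|) := by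
  obtain ⟨hc0, hcH⟩ := clip_mem_Icc (hx.1.trans hx.2) y
  obtain ⟨hx0, hxH⟩ := hx
  refine le_min ?_ ?_
  · rw [abs_sub_le_iff]
    constructor <;> nlinarith
  · calc |x ^ 2 - clip 0 H y ^ 2| = (x + clip 0 H y) * |clip 0 H y - x| := by
          rw [sq_sub_sq, abs_mul, abs_of_nonneg (by linarith), abs_sub_comm]
      _ ≤ (2 * H) * |y - x| :=
          mul_le_mul (by linarith) (abs_clip_sub_le ⟨hx0, hxH⟩ y) (abs_nonneg _) (by linarith)

theorem statement7_general {d : ℕ} (H : ℝ)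
    (Sh St : Matrix (Fin d) (Fin d) ℝ) (hSh : Sh.PosDef) (hSt : St.PosDef)
    (θs θh θt φ ψ : Fin d → ℝ)
    (hψ0 : 0 ≤ ψ ⬝ᵥ θs) (hψH : ψ ⬝ᵥ θs ≤ H ^ 2)
    (hφ0 : 0 ≤ φ ⬝ᵥ θs) (hφH : φ ⬝ᵥ θs ≤ H) :
    |clip 0 (H ^ 2) (ψ ⬝ᵥ θt) - ψ ⬝ᵥ θs + (φ ⬝ᵥ θs) ^ 2 - clip 0 H (φ ⬝ᵥ θh) ^ 2| ≤
      min (H ^ 2)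
          (enorm2 ((hSt.posSemidef.sqrt)⁻¹ *ᵥ ψ) * enorm2 (hSt.posSemidef.sqrt *ᵥ (θt - θs))) +
        min (H ^ 2)
          (2 * H * enorm2 ((hSh.posSemidef.sqrt)⁻¹ *ᵥ φ) *
            enorm2 (hSh.posSemidef.sqrt *ᵥ (θh - θs))) := by
  have hψ_err := (abs_clip_sub_le_min ⟨hψ0, hψH⟩ (ψ ⬝ᵥ θt)).trans
    (min_le_min_left _ (abs_dotProduct_sub_le_of_posDef hSt ψ θt θs))
  have hφ_err := (abs_sq_sub_sq_clip_le_min ⟨hφ0, hφH⟩ (φ ⬝ᵥ θh)).trans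
    (min_le_min_left _ (mul_le_mul_of_nonneg_left (abs_dotProduct_sub_le_of_posDef hSh φ θh θs)
      (by linarith)))
  rw [← mul_assoc] at hφ_err
  rw [add_sub_assoc]
  exact (abs_add_le _ _).trans (add_le_add hψ_err hφ_err)

/-- Estimated variance error bound (Lemma on the difference between the estimated and the
true variance of the value function). -/
theorem statement7 {d : ℕ} (H : ℝ) (hH : 0 < H)
    (Sh St : Matrix (Fin d) (Fin d) ℝ) (hSh : Sh.PosDef) (hSt : St.PosDef)
    (θs θh θt φ ψ : Fin d → ℝ)
    (hψ0 : 0 ≤ ψ ⬝ᵥ θs) (hψH : ψ ⬝ᵥ θs ≤ H ^ 2)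
    (hφ0 : 0 ≤ φ ⬝ᵥ θs) (hφH : φ ⬝ᵥ θs ≤ H) :
    |clip 0 (H ^ 2) (ψ ⬝ᵥ θt) - ψ ⬝ᵥ θs + (φ ⬝ᵥ θs) ^ 2 - clip 0 H (φ ⬝ᵥ θh) ^ 2| ≤
      min (H ^ 2)
          (enorm2 ((hSt.posSemidef.sqrt)⁻¹ *ᵥ ψ) * enorm2 (hSt.posSemidef.sqrt *ᵥ (θt - θs))) +
        min (H ^ 2)
          (2 * H * enorm2 ((hSh.posSemidef.sqrt)⁻¹ *ᵥ φ) *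
            enorm2 (hSh.posSemidef.sqrt *ᵥ (θh - θs))) :=
  statement7_general H Sh St hSh hSt θs θh θt φ ψ hψ0 hψH hφ0 hφH
end

section
/- Lower-bound value gap inequality: under the stated hypotheses, T₁ − S₁ ≥ (H/10) · ∑_{h=1}^{⌊H/2⌋} (c − a_h). -/
/-!
Write `B = c + δ`, `x h = a h + δ`, and `V_k(x)` for the value from stage `k` on. It obeys the
Bellman recursion `V_k = (H - k - 1) x_{k+1} + (1 - x_{k+1}) V_{k+1}`; unrolling it for the
difference of the two values gives the performance-difference identity
`T₁ - S₁ = ∑_{m < H} (1 - B)^m (B - x_{m+1}) (H - m - 1 - V_{m+1}(x))`.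
Since `0 ≤ x ≤ B`, Gauss' sum bounds `V_{m+1}(x) ≤ B n (n - 1) / 2` with `n = H - m - 1`, so with
`3 B H ≤ 4` every summand is nonnegative, and for `m < H/2` the bracket is at least `H/3` while
Bernoulli gives `(1 - B)^m ≥ 1/3`. The first `⌊H/2⌋` summands thus contribute at least
`(H/9) ∑ (B - x_{m+1})`.
-/

open Finset

/-- `T₁ = valueFrom H (fun _ => c + δ) 0` and `S₁ = valueFrom H (fun h => a h + δ) 0`. -/
noncomputable def valueFrom (H : ℕ) (x : ℕ → ℝ) (k : ℕ) : ℝ :=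
  ∑ h ∈ Ioc k H, ((H : ℝ) - h) * x h * ∏ j ∈ Ioo k h, (1 - x j)

theorem eq_sum_range_pow_mul_of_eq_add_mul {R : Type*} [CommSemiring R] {D g : ℕ → R} {r : R}
    {n : ℕ} (hD : ∀ k < n, D k = g k + r * D (k + 1)) (hn : D n = 0) :
    D 0 = ∑ m ∈ range n, r ^ m * g m := by
  have unroll : ∀ k ≤ n, D 0 = ∑ m ∈ range k, r ^ m * g m + r ^ k * D k := by
    intro k hk
    induction k with
    | zero => simp
    | succ k ih =>
      rw [ih (by omega), hD k (by omega), sum_range_succ]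
      ring
  simpa [hn] using unroll n le_rfl

theorem sum_Icc_one_eq_sum_range {M : Type*} [AddCommMonoid M] (f : ℕ → M) (n : ℕ) :
    ∑ h ∈ Icc 1 n, f h = ∑ m ∈ range n, f (m + 1) := by
  rw [← Ico_add_one_right_eq_Icc, sum_Ico_eq_sum_range]
  simp [add_comm]

section

variable {H : ℕ} {x : ℕ → ℝ}

theorem valueFrom_self : valueFrom H x H = 0 := by
  simp [valueFrom]

theorem valueFrom_eq_add_mul {k : ℕ} (hk : k < H) :
    valueFrom H x k = (H - (k + 1)) * x (k + 1) + (1 - x (k + 1)) * valueFrom H x (k + 1) := by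
  rw [valueFrom, ← Icc_add_one_left_eq_Ioc, Icc_eq_cons_Ioc hk, sum_cons, valueFrom, mul_sum,
    ← Ico_add_one_left_eq_Ioo, Ico_self, prod_empty]
  push_cast
  congr 1
  · ring
  refine sum_congr rfl fun h hh => ?_
  rw [← Ico_add_one_left_eq_Ioo, Ico_eq_cons_Ioo (by have := (mem_Ioc.1 hh).1; omega), prod_cons]
  ring

theorem sum_Ioc_sub_eq {k : ℕ} (hk : k ≤ H) :
    ∑ h ∈ Ioc k H, ((H : ℝ) - h) = (H - k) * (H - k - 1) / 2 := by
  induction H, hk using Nat.le_induction with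
  | base => simp
  | succ H hkH ih =>
    rw [sum_Ioc_succ_top hkH]
    simp only [Nat.cast_succ, add_sub_right_comm _ (1 : ℝ), sum_add_distrib, ih, sum_const,
      Nat.card_Ioc, nsmul_eq_mul, Nat.cast_sub hkH]
    ring

theorem valueFrom_le {B : ℝ} {k : ℕ} (hk : k ≤ H) (hB : B ≤ 1)
    (hx : ∀ j ∈ Ioc k H, 0 ≤ x j ∧ x j ≤ B) :
    valueFrom H x k ≤ B * ((H - k) * (H - k - 1) / 2) := by
  rw [← sum_Ioc_sub_eq hk, mul_sum]
  refine sum_le_sum fun h hh => ?_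
  have hhH := (mem_Ioc.1 hh).2
  have hxIoo : ∀ j ∈ Ioo k h, 0 ≤ x j ∧ x j ≤ B := fun j hj =>
    hx j (mem_Ioc.2 ⟨(mem_Ioo.1 hj).1, by have := (mem_Ioo.1 hj).2; omega⟩)
  have hprod : ∏ j ∈ Ioo k h, (1 - x j) ≤ 1 :=
    prod_le_one (fun j hj => by linarith [hxIoo j hj]) (fun j hj => by linarith [hxIoo j hj])
  have hHh : (0 : ℝ) ≤ H - h := sub_nonneg.2 (Nat.cast_le.2 hhH)
  obtain ⟨hxh0, hxhB⟩ := hx h hh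
  calc (H - h) * x h * ∏ j ∈ Ioo k h, (1 - x j) ≤ (H - h) * x h := by
        simpa using mul_le_mul_of_nonneg_left hprod (mul_nonneg hHh hxh0)
    _ ≤ B * (H - h) := by nlinarith

theorem valueFrom_const_sub_eq_sum (B : ℝ) :
    valueFrom H (fun _ => B) 0 - valueFrom H x 0 =
      ∑ m ∈ range H,
        (1 - B) ^ m * ((B - x (m + 1)) * (H - (m + 1) - valueFrom H x (m + 1))) := by
  refine eq_sum_range_pow_mul_of_eq_add_mul
    (D := fun k => valueFrom H (fun _ => B) k - valueFrom H x k) (fun k hk => ?_)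
    (by simp only [valueFrom_self, sub_self])
  rw [valueFrom_eq_add_mul hk, valueFrom_eq_add_mul (x := x) hk]
  ring

variable {B : ℝ}

theorem sub_valueFrom_nonneg {k : ℕ} (hk : k ≤ H) (hB0 : 0 ≤ B) (hB1 : B ≤ 1)
    (hBH : 3 * B * H ≤ 4) (hx : ∀ j ∈ Ioc k H, 0 ≤ x j ∧ x j ≤ B) :
    0 ≤ H - k - valueFrom H x k := by
  have hkH : (k : ℝ) ≤ H := Nat.cast_le.2 hk
  have := valueFrom_le hk hB1 hx
  nlinarith [mul_le_mul_of_nonneg_left hkH hB0]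

theorem div_three_le_sub_valueFrom {k : ℕ} (hk : 2 * k ≤ H) (hB0 : 0 ≤ B) (hB1 : B ≤ 1)
    (hBH : 3 * B * H ≤ 4) (hx : ∀ j ∈ Ioc k H, 0 ≤ x j ∧ x j ≤ B) :
    (H : ℝ) / 3 ≤ H - k - valueFrom H x k := by
  rcases Nat.eq_zero_or_pos H with rfl | hH
  · obtain rfl : k = 0 := by omega
    simp [valueFrom_self]
  have hH' : (0 : ℝ) < H := by exact_mod_cast hH
  have hkH : 2 * (k : ℝ) ≤ H := by exact_mod_cast hk
  have := valueFrom_le (by omega) hB1 hx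
  -- `n ↦ n - B n² / 2` is concave in `n = H - k ∈ [H/2, H]` and `≥ H/3` at both ends.
  nlinarith [mul_nonneg (by linarith : (0 : ℝ) ≤ H - 2 * k) (by linarith : (0 : ℝ) ≤ k),
    mul_le_mul_of_nonneg_right hBH (sq_nonneg ((H : ℝ) - k)),
    mul_nonneg hB0 (sq_nonneg ((H : ℝ) - k))]

theorem one_third_le_one_sub_pow {m : ℕ} (hB : B ≤ 2) (hm : 3 * m * B ≤ 2) :
    (1 : ℝ) / 3 ≤ (1 - B) ^ m := by
  have := one_add_mul_le_pow (a := -B) (by linarith) m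
  rw [← sub_eq_add_neg] at this
  linarith

theorem mul_sum_sub_le_valueFrom_const_sub (hB0 : 0 ≤ B) (hB1 : B ≤ 1) (hBH : 3 * B * H ≤ 4)
    (hx : ∀ j ∈ Ioc 0 H, 0 ≤ x j ∧ x j ≤ B) :
    (H : ℝ) / 10 * ∑ h ∈ Icc 1 (H / 2), (B - x h) ≤
      valueFrom H (fun _ => B) 0 - valueFrom H x 0 := by
  have hxk : ∀ k, ∀ j ∈ Ioc k H, 0 ≤ x j ∧ x j ≤ B := fun k j hj =>
    hx j (mem_Ioc.2 ⟨by have := (mem_Ioc.1 hj).1; omega, (mem_Ioc.1 hj).2⟩)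
  have hgap : ∀ m ∈ range H, 0 ≤ B - x (m + 1) := fun m hm =>
    sub_nonneg.2 (hx (m + 1) (by rw [mem_range] at hm; rw [mem_Ioc]; omega)).2
  rw [valueFrom_const_sub_eq_sum, sum_Icc_one_eq_sum_range, mul_sum]
  set gain := fun m : ℕ =>
    (1 - B) ^ m * ((B - x (m + 1)) * (H - (m + 1) - valueFrom H x (m + 1)))
  calc ∑ m ∈ range (H / 2), (H : ℝ) / 10 * (B - x (m + 1))
      ≤ ∑ m ∈ range (H / 2), gain m := by
        refine sum_le_sum fun m hm => ?_
        have hmH : 2 * (m + 1) ≤ H := by rw [mem_range] at hm; omega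
        have hmR : 2 * ((m : ℝ) + 1) ≤ H := by exact_mod_cast hmH
        have hpow := one_third_le_one_sub_pow (m := m) (by linarith) (by nlinarith)
        have hval := div_three_le_sub_valueFrom hmH hB0 hB1 hBH (hxk _)
        push_cast at hval
        have hd := hgap m (by rw [mem_range] at hm ⊢; omega)
        calc (H : ℝ) / 10 * (B - x (m + 1)) ≤ (1 / 3 * (H / 3)) * (B - x (m + 1)) := by
              gcongr; linarith
          _ ≤ (1 - B) ^ m * (H - (m + 1) - valueFrom H x (m + 1)) * (B - x (m + 1)) := by
              gcongr
          _ = gain m := by ring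
    _ ≤ ∑ m ∈ range H, gain m := by
        refine sum_le_sum_of_subset_of_nonneg (range_subset_range.2 (Nat.div_le_self H 2))
          fun m hm _ => ?_
        have hval := sub_valueFrom_nonneg (mem_range.1 hm) hB0 hB1 hBH (hxk _)
        push_cast at hval
        exact mul_nonneg (pow_nonneg (by linarith) m) (mul_nonneg (hgap m hm) hval)

end

/-- Lower-bound value gap inequality for the hard-to-learn episodic MDP construction. -/
theorem statement8 (H : ℕ) (hH : 3 ≤ H) (c : ℝ) (hc0 : 0 ≤ c) (hc3 : 3 * c ≤ 1 / (H : ℝ))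
    (a : ℕ → ℝ) (ha : ∀ h ∈ Finset.Icc 1 H, |a h| ≤ c) :
    (H : ℝ) / 10 * ∑ h ∈ Finset.Icc 1 (H / 2), (c - a h) ≤
      (∑ h ∈ Finset.Icc 1 H,
          ((H : ℝ) - (h : ℝ)) * (c + 1 / (H : ℝ)) * (1 - c - 1 / (H : ℝ)) ^ (h - 1)) -
        ∑ h ∈ Finset.Icc 1 H,
          ((H : ℝ) - (h : ℝ)) * (a h + 1 / (H : ℝ)) *
            ∏ j ∈ Finset.Icc 1 (h - 1), (1 - a j - 1 / (H : ℝ)) := by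
  have hH' : (3 : ℝ) ≤ H := by exact_mod_cast hH
  have hδ : 1 / (H : ℝ) * H = 1 := one_div_mul_cancel (by positivity)
  have hδ3 : 1 / (H : ℝ) ≤ 1 / 3 := one_div_le_one_div_of_le (by norm_num) hH'
  have hT : valueFrom H (fun _ => c + 1 / H) 0 = ∑ h ∈ Icc 1 H,
      ((H : ℝ) - h) * (c + 1 / H) * (1 - c - 1 / H) ^ (h - 1) := by
    rw [valueFrom, ← Icc_add_one_left_eq_Ioc]
    refine sum_congr rfl fun h _ => ?_
    rw [prod_const, Nat.card_Ioo, sub_sub, Nat.sub_zero]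
  have hS : valueFrom H (fun h => a h + 1 / H) 0 = ∑ h ∈ Icc 1 H,
      ((H : ℝ) - h) * (a h + 1 / H) * ∏ j ∈ Icc 1 (h - 1), (1 - a j - 1 / H) := by
    rw [valueFrom, ← Icc_add_one_left_eq_Ioc]
    refine sum_congr rfl fun h hh => ?_
    rw [← Ico_add_one_left_eq_Ioo, ← Ico_add_one_right_eq_Icc,
      Nat.sub_add_cancel (mem_Icc.1 hh).1, zero_add]
    simp only [sub_sub]
  have hx : ∀ j ∈ Ioc 0 H, 0 ≤ a j + 1 / H ∧ a j + 1 / H ≤ c + 1 / H := fun j hj => by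
    have := abs_le.1 (ha j (by rwa [← Icc_add_one_left_eq_Ioc] at hj))
    constructor <;> linarith
  have key := mul_sum_sub_le_valueFrom_const_sub (by positivity) (by linarith)
    (by nlinarith) hx
  simpa only [hT, hS, add_sub_add_right_eq_sub] using key
end

section
/- Telescoping identity for the value gap: for arbitrary reals δ, c and a_1, …, a_H, T₁ − S₁ = ∑_{h=1}^{H-1} (c − a_h)·(H − h − T_{h+1})·∏_{j=1}^{h-1}(1 − a_j − δ), where T_i and S_i are defined below. -/
open Finset

/-- `T_i = ∑_{h=i}^H (H−h)(c+δ)(1−c−δ)^{h−i}`. -/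
noncomputable def Tval (H : ℕ) (δ c : ℝ) (i : ℕ) : ℝ :=
  ∑ h ∈ Finset.Icc i H, ((H : ℝ) - (h : ℝ)) * (c + δ) * (1 - c - δ) ^ (h - i)

/-- `S_i = ∑_{h=i}^H (H−h)(a_h+δ)∏_{j=i}^{h−1}(1−a_j−δ)`. -/
noncomputable def Sval (H : ℕ) (δ : ℝ) (a : ℕ → ℝ) (i : ℕ) : ℝ :=
  ∑ h ∈ Finset.Icc i H,
    ((H : ℝ) - (h : ℝ)) * (a h + δ) * ∏ j ∈ Finset.Icc i (h - 1), (1 - a j - δ)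

lemma Tval_top (H : ℕ) (δ c : ℝ) : Tval H δ c (H + 1) = 0 := by
  simp [Tval]

lemma Tval_rec (H : ℕ) (δ c : ℝ) (k : ℕ) (hk : k ≤ H) :
    Tval H δ c k = ((H : ℝ) - k) * (c + δ) + (1 - c - δ) * Tval H δ c (k + 1) := by
  unfold Tval
  rw [Finset.Icc_eq_cons_Ioc hk, Finset.sum_cons, Finset.mul_sum]
  simp only [Nat.sub_self, pow_zero, mul_one]
  congr 1
  rw [← Finset.Icc_add_one_left_eq_Ioc]
  refine Finset.sum_congr rfl fun h hh => ?_
  rw [Finset.mem_Icc] at hh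
  have : h - k = (h - (k+1)) + 1 := by omega
  rw [this, pow_succ]
  ring

noncomputable def Gv (H : ℕ) (δ c : ℝ) (a : ℕ → ℝ) (k : ℕ) : ℝ :=
  (∑ h ∈ Finset.Icc 1 k, ((H : ℝ) - (h : ℝ)) * (a h + δ) *
      ∏ j ∈ Finset.Icc 1 (h - 1), (1 - a j - δ))
  + (∏ j ∈ Finset.Icc 1 k, (1 - a j - δ)) * Tval H δ c (k + 1)

lemma Gv_zero (H : ℕ) (δ c : ℝ) (a : ℕ → ℝ) : Gv H δ c a 0 = Tval H δ c 1 := by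
  simp [Gv]

lemma Gv_top (H : ℕ) (δ c : ℝ) (a : ℕ → ℝ) : Gv H δ c a H = Sval H δ a 1 := by
  simp [Gv, Tval_top, Sval]

lemma Gv_step (H : ℕ) (δ c : ℝ) (a : ℕ → ℝ) (k : ℕ) (hk : k + 1 ≤ H) :
    Gv H δ c a k - Gv H δ c a (k + 1) =
      (c - a (k+1)) * ((H : ℝ) - ((k+1 : ℕ) : ℝ) - Tval H δ c (k + 2)) *
        ∏ j ∈ Finset.Icc 1 k, (1 - a j - δ) := by
  unfold Gv
  rw [Finset.sum_Icc_succ_top (by omega : 1 ≤ k + 1),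
      Finset.prod_Icc_succ_top (by omega : 1 ≤ k + 1),
      Tval_rec H δ c (k+1) hk]
  simp only [Nat.add_sub_cancel]
  push_cast
  ring

/-- Telescoping identity for the value gap. -/
theorem statement9 (H : ℕ) (hH : 1 ≤ H) (δ c : ℝ) (a : ℕ → ℝ) :
    Tval H δ c 1 - Sval H δ a 1 =
      ∑ h ∈ Finset.Icc 1 (H - 1),
        (c - a h) * ((H : ℝ) - (h : ℝ) - Tval H δ c (h + 1)) *
          ∏ j ∈ Finset.Icc 1 (h - 1), (1 - a j - δ) := by
  have tel : Tval H δ c 1 - Sval H δ a 1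
      = ∑ k ∈ Finset.range H, (Gv H δ c a k - Gv H δ c a (k+1)) := by
    rw [Finset.sum_range_sub' (Gv H δ c a) H, Gv_zero, Gv_top]
  rw [tel]
  have hrw : ∀ k ∈ Finset.range H,
      Gv H δ c a k - Gv H δ c a (k+1) =
        (c - a (k+1)) * ((H : ℝ) - ((k+1 : ℕ) : ℝ) - Tval H δ c (k + 2)) *
          ∏ j ∈ Finset.Icc 1 ((k+1) - 1), (1 - a j - δ) := by
    intro k hk
    rw [Finset.mem_range] at hk
    rw [Gv_step H δ c a k (by omega)]
    simp
  rw [Finset.sum_congr rfl hrw]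
  have h1 : ∑ k ∈ Finset.range H,
      (c - a (k+1)) * ((H : ℝ) - ((k+1 : ℕ) : ℝ) - Tval H δ c (k + 2)) *
        ∏ j ∈ Finset.Icc 1 ((k+1) - 1), (1 - a j - δ)
      = ∑ h ∈ Finset.Icc 1 H,
        (c - a h) * ((H : ℝ) - (h : ℝ) - Tval H δ c (h + 1)) *
          ∏ j ∈ Finset.Icc 1 (h - 1), (1 - a j - δ) := by
    rw [← Finset.Ico_add_one_right_eq_Icc, Finset.sum_Ico_eq_sum_range]
    simp only [Nat.add_sub_cancel]
    refine Finset.sum_congr rfl fun k _ => ?_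
    simp [add_comm 1 k]
  rw [h1]
  have h2 : Finset.Icc 1 H = Finset.Icc 1 ((H - 1) + 1) := by congr 1; omega
  rw [h2, Finset.sum_Icc_succ_top (by omega : 1 ≤ (H-1)+1)]
  have hH1 : ((H - 1 : ℕ) + 1 : ℕ) = H := by omega
  rw [hH1]
  have : (H : ℝ) - (H : ℝ) - Tval H δ c (H + 1) = 0 := by rw [Tval_top]; ring
  rw [this]
  ring
end

section
/- Remaining-horizon bound: for any integer H ≥ 3, any integer h with 1 ≤ h ≤ H/2, and any real p with 0 < p ≤ 4/(3H), it holds that (1 − (1−p)^{H−h})/p + (1−p)^{H−h} ≥ H/3. -/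
/-!
Since `1 - p ≤ exp (-p)`, the survival probability `(1 - p) ^ (H - h)` is at most `exp (-y / 2)`
with `y = p H ≤ 4 / 3`, because `H - h ≥ H / 2`. The quadratic lower bound on `exp (y / 2)` then
gives `exp (-y / 2) ≤ 1 - y / 3` on `[0, 4 / 3]`, i.e. `1 - (1 - p) ^ (H - h) ≥ p H / 3`.
-/

open Real

lemma one_sub_pow_le_exp_neg_mul {p : ℝ} (hp : p ≤ 1) (n : ℕ) :
    (1 - p) ^ n ≤ exp (-(n * p)) := by
  rw [← mul_neg, exp_nat_mul]
  exact pow_le_pow_left₀ (by linarith) (one_sub_le_exp_neg p) n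

lemma exp_neg_half_le_one_sub_div_three {y : ℝ} (hy0 : 0 ≤ y) (hy : y ≤ 4 / 3) :
    exp (-(y / 2)) ≤ 1 - y / 3 := by
  have hquad := quadratic_le_exp_of_nonneg (by positivity : 0 ≤ y / 2)
  rw [exp_neg, inv_le_iff_one_le_mul₀ (exp_pos _)]
  -- `(1 - y/3)(1 + y/2 + y²/8) - 1 = y (4 - y - y²) / 24`
  nlinarith [mul_le_mul_of_nonneg_left hquad (by linarith : (0 : ℝ) ≤ 1 - y / 3),
    mul_nonneg hy0 (by nlinarith : (0 : ℝ) ≤ 4 - y - y ^ 2)]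

lemma div_three_le_one_sub_one_sub_pow_div {p H : ℝ} {n : ℕ} (hp0 : 0 < p) (hp1 : p ≤ 1)
    (hpH : p * H ≤ 4 / 3) (hH : 0 ≤ H) (hn : H / 2 ≤ n) :
    H / 3 ≤ (1 - (1 - p) ^ n) / p := by
  have hpow : (1 - p) ^ n ≤ 1 - p * H / 3 :=
    calc (1 - p) ^ n ≤ exp (-(n * p)) := one_sub_pow_le_exp_neg_mul hp1 n
      _ ≤ exp (-(p * H / 2)) := exp_le_exp.mpr (by nlinarith)
      _ ≤ 1 - p * H / 3 := exp_neg_half_le_one_sub_div_three (by positivity) hpH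
  rw [le_div_iff₀ hp0]
  linarith

theorem statement10_general (H h : ℕ) (hH : 3 ≤ H) (hh2 : h ≤ H / 2)
    (p : ℝ) (hp0 : 0 < p) (hp : p ≤ 4 / (3 * (H : ℝ))) :
    (H : ℝ) / 3 ≤ (1 - (1 - p) ^ (H - h)) / p + (1 - p) ^ (H - h) := by
  have hH3 : (3 : ℝ) ≤ H := by exact_mod_cast hH
  have hpH : p * H ≤ 4 / 3 := by
    linarith [(le_div_iff₀ (by positivity)).mp hp]
  have hp1 : p ≤ 1 := by nlinarith
  have hn : (H : ℝ) / 2 ≤ (H - h : ℕ) := by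
    have hh : (h : ℝ) ≤ H / 2 := (Nat.cast_le.mpr hh2).trans Nat.cast_div_le
    rw [Nat.cast_sub (hh2.trans (Nat.div_le_self H 2))]
    linarith
  have hpow : 0 ≤ (1 - p) ^ (H - h) := pow_nonneg (by linarith) _
  linarith [div_three_le_one_sub_one_sub_pow_div hp0 hp1 hpH (by positivity) hn]

/-- Remaining-horizon bound in the hard-to-learn episodic MDP construction. -/
theorem statement10 (H h : ℕ) (hH : 3 ≤ H) (hh1 : 1 ≤ h) (hh2 : h ≤ H / 2)
    (p : ℝ) (hp0 : 0 < p) (hp : p ≤ 4 / (3 * (H : ℝ))) :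
    (H : ℝ) / 3 ≤ (1 - (1 - p) ^ (H - h)) / p + (1 - p) ^ (H - h) :=
  statement10_general H h hH hh2 p hp0 hp
end

section
/- Minimax lower bound for linear bandits on the hypercube: let 0 < δ ≤ 1/3, let d ≥ 1 and K be positive integers with K ≥ d²/(2δ), and set Δ = √(δ/K)/(4√2). Then for every deterministic bandit algorithm, i.e., every collection of functions a_k : {0,1}^{k-1} → {−1,1}^d for k = 1, …, K, there exists μ* ∈ {−Δ, Δ}^d such that the expected pseudo-regret satisfies ∑_{r ∈ {0,1}^K} P_{μ*}(r) · ∑_{k=1}^K (dΔ − ⟨μ*, a_k(r_1,…,r_{k-1})⟩) ≥ d√(Kδ)/(8√2). -/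
open Matrix Finset

/-- The probability, under parameter `μ` and the deterministic algorithm `A`, of observing the
Bernoulli reward sequence `r : Fin K → Bool`, where the mean reward of action `a` is
`δ + ⟨μ, a⟩`: `P_μ(r) = ∏_k q_k(r)^{r_k} (1 − q_k(r))^{1−r_k}` with
`q_k(r) = δ + ⟨μ, a_k(r_1,…,r_{k−1})⟩`. -/
noncomputable def banditLaw {d K : ℕ} (δ : ℝ)
    (A : (k : Fin K) → (Fin k.val → Bool) → (Fin d → ℝ)) (μ : Fin d → ℝ)
    (r : Fin K → Bool) : ℝ :=
  ∏ k : Fin K,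
    (if r k then δ + μ ⬝ᵥ A k (fun j => r (Fin.castLE k.isLt.le j))
     else 1 - (δ + μ ⬝ᵥ A k (fun j => r (Fin.castLE k.isLt.le j))))

/-!
Assouad's method. Average the regret over the `2^d` vertices `μ_s = Δ • (±1)^d` of the cube.
The regret splits over the coordinates `i`, and for two vertices that differ only in
coordinate `i` the `i`-th contributions of any reward sequence add up to `2KΔ`; by Le Cam's
two-point argument the `i`-th regrets at the two vertices therefore add up to at least `KΔ`
once the two reward laws are at `ℓ¹`-distance at most `1`.

That distance is controlled by the Bhattacharyya coefficient `∑ √(P Q)`, through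
`‖P - Q‖₁² ≤ 4 (1 - BC²)`. The coefficient is multiplicative along the rounds, and in each
round the two Bernoulli means lie in `[δ/2, 1/2]` and differ by `2Δ`, which costs at most
`1/(8K)`; hence `BC ≥ (1 - 1/(8K))^K ≥ 7/8`.
-/

section SequentialSums

variable {α R : Type*} [Fintype α]

theorem sum_prod_take_succ [CommSemiring R] {n : ℕ}
    (g : (k : Fin (n + 1)) → (Fin k → α) → α → R) :
    ∑ r : Fin (n + 1) → α, ∏ k, g k (Fin.take k k.isLt.le r) (r k) =
      ∑ s : Fin n → α, (∏ k : Fin n, g k.castSucc (Fin.take k k.isLt.le s) (s k)) *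
        ∑ a, g (Fin.last n) s a := by
  rw [← (Fin.snocEquiv fun _ => α).sum_comp, Fintype.sum_prod_type_right]
  refine sum_congr rfl fun s _ => ?_
  rw [mul_sum]
  refine sum_congr rfl fun a _ => ?_
  simp only [Fin.snocEquiv_apply, Fin.prod_univ_castSucc, Fin.snoc_castSucc, Fin.snoc_last]
  congr 2
  · ext k
    congr 1
    ext j
    exact Fin.snoc_castSucc (α := fun _ => α) (p := s) (x := a) (i := Fin.castLE k.isLt.le j)
  · ext j
    exact Fin.snoc_castSucc (α := fun _ => α) (p := s) (x := a) (i := j)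

theorem sum_prod_take_eq_pow [CommSemiring R] {K : ℕ} (c : R)
    (g : (k : Fin K) → (Fin k → α) → α → R) (hg : ∀ k h, ∑ a, g k h a = c) :
    ∑ r : Fin K → α, ∏ k, g k (Fin.take k k.isLt.le r) (r k) = c ^ K := by
  induction K with
  | zero => simp
  | succ n ih =>
    simp only [sum_prod_take_succ, hg, ← sum_mul, ih _ fun k => hg k.castSucc, pow_succ]

theorem pow_le_sum_prod_take [CommSemiring R] [PartialOrder R] [IsOrderedRing R] {K : ℕ} {c : R}
    (hc : 0 ≤ c) (g : (k : Fin K) → (Fin k → α) → α → R) (hg₀ : ∀ k h a, 0 ≤ g k h a)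
    (hg : ∀ k h, c ≤ ∑ a, g k h a) :
    c ^ K ≤ ∑ r : Fin K → α, ∏ k, g k (Fin.take k k.isLt.le r) (r k) := by
  induction K with
  | zero => simp
  | succ n ih =>
    rw [sum_prod_take_succ, pow_succ]
    calc c ^ n * c
        ≤ (∑ s : Fin n → α, ∏ k : Fin n, g k.castSucc (Fin.take k k.isLt.le s) (s k)) * c :=
          mul_le_mul_of_nonneg_right (ih _ (fun k => hg₀ k.castSucc) fun k => hg k.castSucc) hc
      _ ≤ _ := by
        rw [sum_mul]
        exact sum_le_sum fun s _ => mul_le_mul_of_nonneg_left (hg _ _)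
          (prod_nonneg fun k _ => hg₀ _ _ _)

end SequentialSums

section FiniteDistributions

variable {Ω : Type*} [Fintype Ω] {P Q : Ω → ℝ}

theorem sq_sum_abs_sub_le (hP₀ : ∀ ω, 0 ≤ P ω) (hQ₀ : ∀ ω, 0 ≤ Q ω) (hP : ∑ ω, P ω = 1)
    (hQ : ∑ ω, Q ω = 1) :
    (∑ ω, |P ω - Q ω|) ^ 2 ≤ 4 * (1 - (∑ ω, √(P ω * Q ω)) ^ 2) := by
  set BC := ∑ ω, √(P ω * Q ω)
  have hP' ω : √(P ω) ^ 2 = P ω := Real.sq_sqrt (hP₀ ω)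
  have hQ' ω : √(Q ω) ^ 2 = Q ω := Real.sq_sqrt (hQ₀ ω)
  have hPQ ω : √(P ω * Q ω) = √(P ω) * √(Q ω) := Real.sqrt_mul (hP₀ ω) _
  have h_sub : ∑ ω, |√(P ω) - √(Q ω)| ^ 2 = 2 - 2 * BC := by
    simp only [sq_abs, sub_sq, hP', hQ', hPQ, BC, mul_assoc, sum_add_distrib, sum_sub_distrib,
      ← mul_sum, hP, hQ]
    ring
  have h_add : ∑ ω, (√(P ω) + √(Q ω)) ^ 2 = 2 + 2 * BC := by
    simp only [add_sq, hP', hQ', hPQ, BC, mul_assoc, sum_add_distrib, ← mul_sum, hP, hQ]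
    ring
  have h_abs ω : |P ω - Q ω| = |√(P ω) - √(Q ω)| * (√(P ω) + √(Q ω)) := by
    rw [mul_comm, ← abs_of_nonneg (by positivity : 0 ≤ √(P ω) + √(Q ω)), ← abs_mul, ← sq_sub_sq,
      hP', hQ']
  calc (∑ ω, |P ω - Q ω|) ^ 2
      ≤ (∑ ω, |√(P ω) - √(Q ω)| ^ 2) * ∑ ω, (√(P ω) + √(Q ω)) ^ 2 := by
        simp only [h_abs]; exact sum_mul_sq_le_sq_mul_sq _ _ _
    _ = 4 * (1 - BC ^ 2) := by rw [h_sub, h_add]; ring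

theorem sum_mul_sub_sum_mul_le {f : Ω → ℝ} {B : ℝ} (hP : ∑ ω, P ω = 1) (hQ : ∑ ω, Q ω = 1)
    (hf₀ : ∀ ω, 0 ≤ f ω) (hfB : ∀ ω, f ω ≤ B) :
    ∑ ω, Q ω * f ω - ∑ ω, P ω * f ω ≤ B / 2 * ∑ ω, |P ω - Q ω| := by
  have h_centre : ∑ ω, Q ω * f ω - ∑ ω, P ω * f ω = ∑ ω, (Q ω - P ω) * (f ω - B / 2) := by
    simp only [sub_mul, mul_sub, sum_sub_distrib, ← sum_mul, hP, hQ]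
    ring
  rw [h_centre, mul_sum]
  refine sum_le_sum fun ω _ => ?_
  calc (Q ω - P ω) * (f ω - B / 2) ≤ |Q ω - P ω| * |f ω - B / 2| := by
        rw [← abs_mul]; exact le_abs_self _
    _ ≤ |P ω - Q ω| * (B / 2) := by
        rw [abs_sub_comm]
        exact mul_le_mul_of_nonneg_left (abs_le.mpr ⟨by linarith [hf₀ ω], by linarith [hfB ω]⟩)
          (abs_nonneg _)
    _ = B / 2 * |P ω - Q ω| := mul_comm _ _

theorem le_sum_mul_add_sum_mul {g h : Ω → ℝ} {B τ : ℝ} (hP : ∑ ω, P ω = 1)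
    (hQ : ∑ ω, Q ω = 1) (hg₀ : ∀ ω, 0 ≤ g ω) (hh₀ : ∀ ω, 0 ≤ h ω) (hgh : ∀ ω, g ω + h ω = B)
    (hτ : ∑ ω, |P ω - Q ω| ≤ τ) :
    B * (1 - τ / 2) ≤ ∑ ω, P ω * g ω + ∑ ω, Q ω * h ω := by
  have hB : 0 ≤ B := by
    obtain ⟨ω, -, -⟩ := exists_ne_zero_of_sum_ne_zero (hP ▸ one_ne_zero)
    exact hgh ω ▸ add_nonneg (hg₀ ω) (hh₀ ω)
  have hQh : ∑ ω, Q ω * h ω = B - ∑ ω, Q ω * g ω := by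
    rw [eq_sub_iff_add_eq, ← sum_add_distrib]
    simp only [← mul_add, add_comm (h _), hgh, ← sum_mul, hQ, one_mul]
  have := sum_mul_sub_sum_mul_le hP hQ hg₀ fun ω => hgh ω ▸ le_add_of_nonneg_right (hh₀ ω)
  linarith [mul_le_mul_of_nonneg_left hτ (by positivity : 0 ≤ B / 2)]

end FiniteDistributions

theorem exists_le_sum_mul_sum_of_flip {ι Ω : Type*} [Fintype ι] [DecidableEq ι] [Fintype Ω]
    (P : (ι → Bool) → Ω → ℝ) (f : ι → Bool → Ω → ℝ) {B τ : ℝ}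
    (hP : ∀ s, ∑ ω, P s ω = 1) (hf₀ : ∀ i b ω, 0 ≤ f i b ω)
    (hf : ∀ i b ω, f i b ω + f i (!b) ω = B)
    (hτ : ∀ s i, ∑ ω, |P s ω - P (Function.update s i (!s i)) ω| ≤ τ) :
    ∃ s, Fintype.card ι * (B * (1 - τ / 2)) / 2 ≤ ∑ ω, P s ω * ∑ i, f i (s i) ω := by
  set T : (ι → Bool) → ι → ℝ := fun s i => ∑ ω, P s ω * f i (s i) ω
  set toggle : ι → (ι → Bool) → ι → Bool := fun i s => Function.update s i (!s i)
  have h_toggle i : Function.Involutive (toggle i) := fun s => by simp [toggle]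
  have h_pair s i : B * (1 - τ / 2) ≤ T s i + T (toggle i s) i := by
    simpa [T, toggle] using le_sum_mul_add_sum_mul (hP s) (hP _) (hf₀ i (s i)) (hf₀ i (!s i))
      (hf i (s i)) (hτ s i)
  have h_coord i : Fintype.card (ι → Bool) * (B * (1 - τ / 2)) / 2 ≤ ∑ s, T s i := by
    have := sum_le_sum fun s (_ : s ∈ univ) => h_pair s i
    rw [sum_add_distrib, (h_toggle i).bijective.sum_comp (T · i), sum_const, card_univ,
      nsmul_eq_mul] at this
    linarith
  have h_total : ∑ _s : ι → Bool, Fintype.card ι * (B * (1 - τ / 2)) / 2 ≤ ∑ s, ∑ i, T s i := by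
    rw [sum_comm]
    calc _ = ∑ _i : ι, Fintype.card (ι → Bool) * (B * (1 - τ / 2)) / 2 := by
          simp only [sum_const, card_univ, nsmul_eq_mul]; ring
      _ ≤ _ := sum_le_sum fun i _ => h_coord i
  obtain ⟨s, -, hs⟩ := exists_le_of_sum_le univ_nonempty h_total
  exact ⟨s, hs.trans_eq (by simp only [T, mul_sum]; exact sum_comm)⟩

theorem sqrt_sub_sqrt_sq_mul_le {a b : ℝ} (ha : 0 ≤ a) (hb : 0 ≤ b) :
    (√a - √b) ^ 2 * (a + b) ≤ (a - b) ^ 2 :=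
  calc (√a - √b) ^ 2 * (a + b) ≤ (√a - √b) ^ 2 * (√a + √b) ^ 2 := by
        gcongr
        nlinarith [Real.sq_sqrt ha, Real.sq_sqrt hb, Real.sqrt_nonneg a, Real.sqrt_nonneg b]
    _ = (a - b) ^ 2 := by rw [← mul_pow, mul_comm, ← sq_sub_sq, Real.sq_sqrt ha, Real.sq_sqrt hb]

theorem one_sub_le_sqrt_mul_add_sqrt_one_sub_mul {q q' : ℝ} (hq₀ : 0 < q) (hq₁ : q < 1)
    (hq'₀ : 0 < q') (hq'₁ : q' < 1) :
    1 - (q - q') ^ 2 / ((q + q') * (2 - q - q')) ≤ √(q * q') + √((1 - q) * (1 - q')) := by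
  have h_left : (√q - √q') ^ 2 ≤ (q - q') ^ 2 / (q + q') := by
    rw [le_div_iff₀ (by linarith)]
    exact sqrt_sub_sqrt_sq_mul_le hq₀.le hq'₀.le
  have h_right : (√(1 - q) - √(1 - q')) ^ 2 ≤ (q - q') ^ 2 / (2 - q - q') := by
    rw [le_div_iff₀ (by linarith)]
    calc (√(1 - q) - √(1 - q')) ^ 2 * (2 - q - q')
        = (√(1 - q) - √(1 - q')) ^ 2 * ((1 - q) + (1 - q')) := by ring
      _ ≤ ((1 - q) - (1 - q')) ^ 2 := sqrt_sub_sqrt_sq_mul_le (by linarith) (by linarith)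
      _ = (q - q') ^ 2 := by ring
  have h_split : (q - q') ^ 2 / (q + q') + (q - q') ^ 2 / (2 - q - q') =
      2 * ((q - q') ^ 2 / ((q + q') * (2 - q - q'))) := by
    have : q + q' ≠ 0 := by linarith
    have : 2 - q - q' ≠ 0 := by linarith
    field_simp
    ring
  have h_hellinger : √(q * q') + √((1 - q) * (1 - q')) =
      1 - ((√q - √q') ^ 2 + (√(1 - q) - √(1 - q')) ^ 2) / 2 := by
    rw [Real.sqrt_mul hq₀.le, Real.sqrt_mul (by linarith), sub_sq, sub_sq, Real.sq_sqrt hq₀.le,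
      Real.sq_sqrt hq'₀.le, Real.sq_sqrt (by linarith), Real.sq_sqrt (by linarith)]
    ring
  linarith

def bernoulliWeight (q : ℝ) (b : Bool) : ℝ := if b then q else 1 - q

theorem bernoulliWeight_nonneg {q : ℝ} (hq : q ∈ Set.Icc 0 1) (b : Bool) :
    0 ≤ bernoulliWeight q b := by
  cases b <;> simp [bernoulliWeight, hq.1, hq.2]

theorem sum_bernoulliWeight (q : ℝ) : ∑ b, bernoulliWeight q b = 1 := by
  simp [bernoulliWeight]

section Cube

variable {ι : Type*} {Δ : ℝ}

def cubeVertex (Δ : ℝ) (s : ι → Bool) : ι → ℝ := fun i => if s i then Δ else -Δ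

theorem cubeVertex_eq_or (Δ : ℝ) (s : ι → Bool) (i : ι) :
    cubeVertex Δ s i = Δ ∨ cubeVertex Δ s i = -Δ := by
  unfold cubeVertex; split_ifs <;> simp

theorem abs_cubeVertex (hΔ : 0 ≤ Δ) (s : ι → Bool) (i : ι) : |cubeVertex Δ s i| = Δ := by
  rcases cubeVertex_eq_or Δ s i with h | h <;> simp [h, abs_of_nonneg hΔ]

theorem cubeVertex_sub_cubeVertex_update [DecidableEq ι] (Δ : ℝ) (s : ι → Bool) (i : ι) :
    cubeVertex Δ s - cubeVertex Δ (Function.update s i (!s i)) =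
      Pi.single i (2 * cubeVertex Δ s i) := by
  ext j
  obtain rfl | hj := eq_or_ne j i
  · by_cases h : s j <;> simp [cubeVertex, h] <;> ring
  · simp [cubeVertex, hj]

theorem abs_cubeVertex_dotProduct_le [Fintype ι] (hΔ : 0 ≤ Δ) (s : ι → Bool) {a : ι → ℝ}
    (ha : ∀ i, |a i| ≤ 1) : |cubeVertex Δ s ⬝ᵥ a| ≤ Fintype.card ι * Δ :=
  calc |cubeVertex Δ s ⬝ᵥ a| ≤ ∑ i, |cubeVertex Δ s i * a i| := abs_sum_le_sum_abs _ _
    _ ≤ ∑ _i : ι, Δ := sum_le_sum fun i _ => by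
        rw [abs_mul, abs_cubeVertex hΔ]
        exact mul_le_of_le_one_right hΔ (ha i)
    _ = Fintype.card ι * Δ := by simp

end Cube

section Bandit

variable {d K : ℕ} {δ : ℝ} {A : (k : Fin K) → (Fin k.val → Bool) → (Fin d → ℝ)}

theorem banditLaw_eq_prod (μ : Fin d → ℝ) (r : Fin K → Bool) :
    banditLaw δ A μ r =
      ∏ k, bernoulliWeight (δ + μ ⬝ᵥ A k (Fin.take k k.isLt.le r)) (r k) := rfl

theorem sum_banditLaw (μ : Fin d → ℝ) : ∑ r, banditLaw δ A μ r = 1 := by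
  simp only [banditLaw_eq_prod]
  simpa using sum_prod_take_eq_pow 1 (fun k h => bernoulliWeight (δ + μ ⬝ᵥ A k h))
    fun _ _ => sum_bernoulliWeight _

theorem banditLaw_nonneg {μ : Fin d → ℝ} (hμ : ∀ k h, δ + μ ⬝ᵥ A k h ∈ Set.Icc 0 1)
    (r : Fin K → Bool) : 0 ≤ banditLaw δ A μ r :=
  prod_nonneg fun k _ => bernoulliWeight_nonneg (hμ k _) (r k)

theorem pow_le_sum_sqrt_banditLaw_mul {μ ν : Fin d → ℝ} {c : ℝ} (hc : 0 ≤ c)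
    (hμ : ∀ k h, δ + μ ⬝ᵥ A k h ∈ Set.Icc 0 1) (hν : ∀ k h, δ + ν ⬝ᵥ A k h ∈ Set.Icc 0 1)
    (h_step : ∀ k h, c ≤ √((δ + μ ⬝ᵥ A k h) * (δ + ν ⬝ᵥ A k h)) +
      √((1 - (δ + μ ⬝ᵥ A k h)) * (1 - (δ + ν ⬝ᵥ A k h)))) :
    c ^ K ≤ ∑ r, √(banditLaw δ A μ r * banditLaw δ A ν r) := by
  simp only [banditLaw_eq_prod, ← prod_mul_distrib]
  simp only [Real.sqrt_prod _ fun k _ => mul_nonneg (bernoulliWeight_nonneg (hμ k _) _)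
    (bernoulliWeight_nonneg (hν k _) _)]
  exact pow_le_sum_prod_take hc
    (fun k h b => √(bernoulliWeight (δ + μ ⬝ᵥ A k h) b * bernoulliWeight (δ + ν ⬝ᵥ A k h) b))
    (fun _ _ _ => Real.sqrt_nonneg _) fun k h => by
      simpa [bernoulliWeight, add_comm] using h_step k h

theorem sum_abs_banditLaw_sub_le_one {μ ν : Fin d → ℝ} (hδ : 0 < δ)
    (hμ : ∀ k h, δ + μ ⬝ᵥ A k h ∈ Set.Icc (δ / 2) (1 / 2))
    (hν : ∀ k h, δ + ν ⬝ᵥ A k h ∈ Set.Icc (δ / 2) (1 / 2))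
    (hμν : ∀ k h, 8 * K * (μ ⬝ᵥ A k h - ν ⬝ᵥ A k h) ^ 2 ≤ δ) :
    ∑ r, |banditLaw δ A μ r - banditLaw δ A ν r| ≤ 1 := by
  obtain rfl | hK := Nat.eq_zero_or_pos K
  · simp [banditLaw]
  have hK' : (0 : ℝ) < 8 * K := by positivity
  have h_inv : 1 / (8 * K : ℝ) ≤ 1 := by rw [div_le_one hK']; norm_cast; omega
  have h_unit : Set.Icc (δ / 2) (1 / 2) ⊆ Set.Icc 0 1 :=
    Set.Icc_subset_Icc (by linarith) (by norm_num)
  have hμ' k h := h_unit (hμ k h)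
  have hν' k h := h_unit (hν k h)
  have h_step k h : 1 - 1 / (8 * K) ≤ √((δ + μ ⬝ᵥ A k h) * (δ + ν ⬝ᵥ A k h)) +
      √((1 - (δ + μ ⬝ᵥ A k h)) * (1 - (δ + ν ⬝ᵥ A k h))) := by
    obtain ⟨hq₀, hq₁⟩ := hμ k h
    obtain ⟨hq'₀, hq'₁⟩ := hν k h
    refine le_trans ?_ (one_sub_le_sqrt_mul_add_sqrt_one_sub_mul (by linarith) (by linarith)
      (by linarith) (by linarith))
    gcongr 1 - ?_
    rw [div_le_div_iff₀ (by nlinarith) hK']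
    -- the denominator is at least `δ`, as both means lie in `[δ/2, 1/2]`
    nlinarith [hμν k h]
  have h_bernoulli : (7 / 8 : ℝ) ≤ (1 - 1 / (8 * K)) ^ K :=
    calc (7 / 8 : ℝ) = 1 + K * -(1 / (8 * K)) := by field_simp; ring
      _ ≤ (1 + -(1 / (8 * K))) ^ K := one_add_mul_le_pow (by linarith) K
      _ = (1 - 1 / (8 * K)) ^ K := by rw [sub_eq_add_neg]
  have h_bc := h_bernoulli.trans <|
    pow_le_sum_sqrt_banditLaw_mul (sub_nonneg.2 h_inv) hμ' hν' h_step
  have h_le_cam := sq_sum_abs_sub_le (banditLaw_nonneg hμ') (banditLaw_nonneg hν')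
    (sum_banditLaw μ) (sum_banditLaw ν)
  nlinarith [sum_nonneg fun r (_ : r ∈ univ) => abs_nonneg (banditLaw δ A μ r - banditLaw δ A ν r)]

theorem sum_abs_banditLaw_cubeVertex_sub_le_one {Δ : ℝ} (hδ : 0 < δ) (hδ₁ : δ ≤ 1 / 3)
    (hΔ : 0 ≤ Δ) (hdΔ : d * Δ ≤ δ / 4) (hKΔ : 32 * K * Δ ^ 2 ≤ δ)
    (hA : ∀ k h i, A k h i = 1 ∨ A k h i = -1) (s : Fin d → Bool) (i : Fin d) :
    ∑ r, |banditLaw δ A (cubeVertex Δ s) r -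
      banditLaw δ A (cubeVertex Δ (Function.update s i (!s i))) r| ≤ 1 := by
  have hA_abs k h i : |A k h i| = 1 := by rcases hA k h i with h | h <;> simp [h]
  have h_mean s k h : δ + cubeVertex Δ s ⬝ᵥ A k h ∈ Set.Icc (δ / 2) (1 / 2) := by
    have := abs_le.1 ((abs_cubeVertex_dotProduct_le hΔ s fun i => (hA_abs k h i).le).trans
      (by simpa using hdΔ))
    constructor <;> linarith [this.1, this.2]
  refine sum_abs_banditLaw_sub_le_one hδ (h_mean s) (h_mean _) fun k h => ?_
  rw [← sub_dotProduct, cubeVertex_sub_cubeVertex_update, single_dotProduct, mul_pow, mul_pow,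
    ← sq_abs (cubeVertex _ _ _), abs_cubeVertex hΔ, ← sq_abs (A k h i), hA_abs]
  linarith

theorem exists_le_regret_cubeVertex {Δ : ℝ} (hΔ : 0 ≤ Δ)
    (hA : ∀ k h i, A k h i = 1 ∨ A k h i = -1)
    (hTV : ∀ s i, ∑ r, |banditLaw δ A (cubeVertex Δ s) r -
      banditLaw δ A (cubeVertex Δ (Function.update s i (!s i))) r| ≤ 1) :
    ∃ s, d * K * Δ / 2 ≤ ∑ r, banditLaw δ A (cubeVertex Δ s) r *
      ∑ k, (d * Δ - cubeVertex Δ s ⬝ᵥ A k (Fin.take k k.isLt.le r)) := by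
  set f : Fin d → Bool → (Fin K → Bool) → ℝ := fun i b r =>
    ∑ k, (Δ - (if b then Δ else -Δ) * A k (Fin.take k k.isLt.le r) i)
  have hf₀ i b r : 0 ≤ f i b r := sum_nonneg fun k _ => by
    cases b <;> rcases hA k (Fin.take k k.isLt.le r) i with h | h <;> simp [h] <;> linarith
  have hf i b r : f i b r + f i (!b) r = 2 * K * Δ := by
    rw [← sum_add_distrib]
    cases b <;> simp <;> ring
  obtain ⟨s, hs⟩ := exists_le_sum_mul_sum_of_flip (fun s => banditLaw δ A (cubeVertex Δ s)) f
    (fun s => sum_banditLaw _) hf₀ hf hTV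
  refine ⟨s, ?_⟩
  convert hs using 1
  · simp only [Fintype.card_fin]
    ring
  · refine sum_congr rfl fun r _ => ?_
    rw [sum_comm]
    congr 1
    refine sum_congr rfl fun k _ => ?_
    simp only [dotProduct, sum_sub_distrib, sum_const, card_univ, Fintype.card_fin, nsmul_eq_mul]
    rfl

end Bandit

theorem statement12_general (d K : ℕ) (hK : 1 ≤ K) (δ Δ : ℝ)
    (hδ0 : 0 < δ) (hδ1 : δ ≤ 1 / 3) (hKd : (d : ℝ) ^ 2 / (2 * δ) ≤ (K : ℝ))
    (hΔ : Δ = Real.sqrt (δ / (K : ℝ)) / (4 * Real.sqrt 2))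
    (A : (k : Fin K) → (Fin k.val → Bool) → (Fin d → ℝ))
    (hA : ∀ k h i, A k h i = 1 ∨ A k h i = -1) :
    ∃ μ : Fin d → ℝ, (∀ i, μ i = Δ ∨ μ i = -Δ) ∧
      (d : ℝ) * Real.sqrt ((K : ℝ) * δ) / (8 * Real.sqrt 2) ≤
        ∑ r : Fin K → Bool, banditLaw δ A μ r *
          ∑ k : Fin K,
            ((d : ℝ) * Δ - μ ⬝ᵥ A k (fun j => r (Fin.castLE k.isLt.le j))) := by
  have hK₀ : (0 : ℝ) < K := by exact_mod_cast hK
  have hΔ₀ : 0 ≤ Δ := hΔ ▸ by positivity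
  have hKΔ : 32 * K * Δ ^ 2 = δ := by
    rw [hΔ, div_pow, mul_pow, Real.sq_sqrt (by positivity), Real.sq_sqrt zero_le_two]
    field_simp
    ring
  have hdΔ : d * Δ ≤ δ / 4 := by
    rw [div_le_iff₀ (by positivity)] at hKd
    nlinarith
  obtain ⟨s, hs⟩ := exists_le_regret_cubeVertex hΔ₀ hA
    (sum_abs_banditLaw_cubeVertex_sub_le_one hδ0 hδ1 hΔ₀ hdΔ hKΔ.le hA)
  refine ⟨cubeVertex Δ s, cubeVertex_eq_or Δ s, le_of_eq_of_le ?_ hs⟩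
  rw [Real.sqrt_mul hK₀.le, hΔ, Real.sqrt_div' _ hK₀.le]
  field_simp
  rw [Real.sq_sqrt hK₀.le]
  ring

/-- Minimax lower bound for linear bandits on the hypercube: for every deterministic algorithm
there is a parameter `μ* ∈ {−Δ, Δ}^d` whose expected pseudo-regret is at least
`d√(Kδ)/(8√2)`. -/
theorem statement12 (d K : ℕ) (hd : 1 ≤ d) (hK : 1 ≤ K) (δ Δ : ℝ)
    (hδ0 : 0 < δ) (hδ1 : δ ≤ 1 / 3) (hKd : (d : ℝ) ^ 2 / (2 * δ) ≤ (K : ℝ))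
    (hΔ : Δ = Real.sqrt (δ / (K : ℝ)) / (4 * Real.sqrt 2))
    (A : (k : Fin K) → (Fin k.val → Bool) → (Fin d → ℝ))
    (hA : ∀ k h i, A k h i = 1 ∨ A k h i = -1) :
    ∃ μ : Fin d → ℝ, (∀ i, μ i = Δ ∨ μ i = -Δ) ∧
      (d : ℝ) * Real.sqrt ((K : ℝ) * δ) / (8 * Real.sqrt 2) ≤
        ∑ r : Fin K → Bool, banditLaw δ A μ r *
          ∑ k : Fin K,
            ((d : ℝ) * Δ - μ ⬝ᵥ A k (fun j => r (Fin.castLE k.isLt.le j))) :=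
  statement12_general d K hK δ Δ hδ0 hδ1 hKd hΔ A hA
end

section
/- Determinant norm-comparison lemma: if A and B are d×d positive definite real matrices with A ⪰ B (i.e., A − B is positive semidefinite), then for every x ∈ ℝ^d, ‖x‖_A ≤ ‖x‖_B · √(det(A)/det(B)). -/
/-!
Conjugating by `B^{-1/2}` reduces to the case `B = 1 ≤ C`, where `C = B^{-1/2} A B^{-1/2}`. All
eigenvalues of `C` are then at least `1`, so each of them is at most their product
`det C = det A / det B`. Hence `C ≤ det C • 1`, that is, `A ≤ (det A / det B) • B` in the Loewner
order, and the bound follows by evaluating both quadratic forms at `x` and taking square roots.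
-/

open Matrix

open scoped MatrixOrder

namespace Matrix

variable {n : Type*} [Fintype n]

theorem dotProduct_mulVec_le_of_le_smul {A B : Matrix n n ℝ} {c : ℝ} (h : A ≤ c • B)
    (x : n → ℝ) : x ⬝ᵥ A *ᵥ x ≤ c * (x ⬝ᵥ B *ᵥ x) := by
  simpa only [star_trivial, sub_mulVec, smul_mulVec, dotProduct_sub, dotProduct_smul,
    smul_eq_mul, sub_nonneg] using (le_iff.1 h).dotProduct_mulVec_nonneg x

variable [DecidableEq n]

theorem le_det_smul_one_of_one_le {C : Matrix n n ℝ} (hC : 1 ≤ C) : C ≤ C.det • 1 := by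
  have hH : C.IsHermitian := by simpa using hC.isHermitian.add isHermitian_one
  have h1 : ∀ i, 1 ≤ hH.eigenvalues i := fun i =>
    (algebraMap_le_iff_le_spectrum (r := (1 : ℝ)) hH.isSelfAdjoint).1 (by simpa using hC) _
      (hH.eigenvalues_mem_spectrum_real i)
  rw [← Algebra.algebraMap_eq_smul_one, le_algebraMap_iff_spectrum_le hH.isSelfAdjoint,
    hH.spectrum_real_eq_range_eigenvalues, hH.det_eq_prod_eigenvalues]
  rintro _ ⟨i, rfl⟩
  simpa using Finset.prod_le_prod_of_subset_of_one_le
    (Finset.singleton_subset_iff.2 (Finset.mem_univ i))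
    (by simp [zero_le_one.trans (h1 i)]) (fun j _ _ => h1 j)

theorem le_det_div_det_smul_of_le {A B : Matrix n n ℝ} (hB : B.PosDef) (hBA : B ≤ A) :
    A ≤ (A.det / B.det) • B := by
  set S := CFC.sqrt B
  have hS : IsSelfAdjoint S := (CFC.sqrt_nonneg B).isSelfAdjoint
  have hSS : S * S = B := CFC.sqrt_mul_sqrt_self B hB.posSemidef.nonneg
  have hdetS : IsUnit S.det := by
    rw [isUnit_iff_ne_zero, hB.posSemidef.det_sqrt, RCLike.sqrt_real]
    exact Real.sqrt_ne_zero'.2 hB.det_pos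
  have hST : S * S⁻¹ = 1 := mul_nonsing_inv S hdetS
  have hTS : S⁻¹ * S = 1 := nonsing_inv_mul S hdetS
  have hSinv : IsSelfAdjoint S⁻¹ := by
    rw [IsSelfAdjoint, star_eq_conjTranspose, conjTranspose_nonsing_inv, ← star_eq_conjTranspose,
      hS.star_eq]
  set C := S⁻¹ * A * S⁻¹
  have hC : 1 ≤ C := by
    simpa only [← hSS, ← mul_assoc, hTS, one_mul, hST] using hSinv.conjugate_le_conjugate hBA
  have hSCS : S * C * S = A := by
    simp only [C, ← mul_assoc, hST, one_mul]
    rw [mul_assoc, hTS, mul_one]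
  have hdetC : C.det = A.det / B.det := by
    rw [det_mul, det_mul, det_nonsing_inv, ← hSS, det_mul, Ring.inverse_eq_inv]
    field_simp
  calc A = S * C * S := hSCS.symm
    _ ≤ S * (C.det • 1) * S := hS.conjugate_le_conjugate (le_det_smul_one_of_one_le hC)
    _ = (A.det / B.det) • B := by rw [hdetC, mul_smul_comm, smul_mul_assoc, mul_one, hSS]

end Matrix

theorem statement16_general {d : ℕ} (A B : Matrix (Fin d) (Fin d) ℝ)
    (hB : B.PosDef) (hAB : (A - B).PosSemidef) (x : Fin d → ℝ) :
    matNorm A x ≤ matNorm B x * Real.sqrt (A.det / B.det) := by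
  have hBx : 0 ≤ x ⬝ᵥ B *ᵥ x := by simpa using hB.posSemidef.dotProduct_mulVec_nonneg x
  rw [matNorm, matNorm, ← Real.sqrt_mul hBx, mul_comm]
  exact Real.sqrt_le_sqrt <|
    dotProduct_mulVec_le_of_le_smul (le_det_div_det_smul_of_le hB (le_iff.2 hAB)) x

/-- Determinant norm-comparison lemma. -/
theorem statement16 {d : ℕ} (A B : Matrix (Fin d) (Fin d) ℝ)
    (hA : A.PosDef) (hB : B.PosDef) (hAB : (A - B).PosSemidef) (x : Fin d → ℝ) :
    matNorm A x ≤ matNorm B x * Real.sqrt (A.det / B.det) :=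
  statement16_general A B hB hAB x
end

section
/- Freedman's inequality: let M, v > 0 and let {x_i}_{i=1}^n be a process adapted to a filtration {G_i} such that x_i is G_i-measurable, E[x_i | G_{i-1}] = 0 almost surely, |x_i| ≤ M almost surely, and ∑_{i=1}^n E[x_i² | G_{i-1}] ≤ v almost surely. Then for any δ > 0, with probability at least 1 − δ, ∑_{i=1}^n x_i ≤ √(2v·log(1/δ)) + (2/3)·M·log(1/δ). -/
/-!
For `|y| ≤ M` and `0 ≤ λ`, `λ M < 3`, comparing the exponential series with a geometric series
gives Bernstein's bound `e^{λy} ≤ 1 + λy + ψ y²` with `ψ = λ² / (2 (1 - λM/3))`. Taking conditional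
expectations of the martingale differences, `exp (λ S_k - ψ V_k)` is a supermartingale, where `S_k`
is the partial sum and `V_k` the predictable quadratic variation; hence `E exp (λ S_n) ≤ exp (ψ v)`.
Chernoff's bound gives `P (S_n ≥ t) ≤ exp (ψ v - λ t)`, and for
`t = √(2 v log (1/δ)) + (2/3) M log (1/δ)` the choice `λ = t / (v + M t / 3)` makes this
at most `δ`, because `t` is at least the positive root of `t² = 2 log (1/δ) (v + M t / 3)`.
-/

open MeasureTheory Finset
open Real ProbabilityTheory
open scoped Nat

lemma Real.exp_sub_one_sub_eq_tsum (u : ℝ) :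
    exp u - 1 - u = ∑' k : ℕ, u ^ (k + 2) / (k + 2)! := by
  have hhead : ∑ k ∈ range 2, u ^ k / k ! = 1 + u := by norm_num [sum_range_succ]
  rw [exp_eq_exp_ℝ, ← (NormedSpace.expSeries_div_hasSum_exp u).tsum_eq,
    ← (summable_pow_div_factorial u).sum_add_tsum_nat_add 2, hhead]
  ring

lemma Real.exp_sub_one_sub_le_of_abs_le {u c : ℝ} (hu : |u| ≤ c) (hc3 : c < 3) :
    exp u - 1 - u ≤ u ^ 2 / (2 * (1 - c / 3)) := by
  have hc : 0 ≤ c := (abs_nonneg u).trans hu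
  have hc0 : 0 ≤ c / 3 := by positivity
  have hc1 : c / 3 < 1 := by linarith
  have hgeom : u ^ 2 / (2 * (1 - c / 3)) = ∑' k : ℕ, u ^ 2 / 2 * (c / 3) ^ k := by
    rw [tsum_mul_left, tsum_geometric_of_lt_one hc0 hc1]
    field_simp
  rw [exp_sub_one_sub_eq_tsum, hgeom]
  refine Summable.tsum_le_tsum (fun k => ?_)
    ((summable_nat_add_iff 2).2 (summable_pow_div_factorial u))
    ((summable_geometric_of_lt_one hc0 hc1).mul_left _)
  have hfact : (2 * 3 ^ k : ℝ) ≤ (k + 2)! := by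
    exact_mod_cast (add_comm 2 k ▸ Nat.factorial_mul_pow_le_factorial (m := 2) (n := k))
  have hpow : u ^ (k + 2) ≤ u ^ 2 * c ^ k := calc
    u ^ (k + 2) ≤ |u| ^ k * u ^ 2 := by
      rw [pow_add]
      exact mul_le_mul_of_nonneg_right ((le_abs_self _).trans_eq (abs_pow u k)) (sq_nonneg u)
    _ ≤ c ^ k * u ^ 2 := by gcongr
    _ = u ^ 2 * c ^ k := mul_comm _ _
  calc u ^ (k + 2) / (k + 2)! ≤ u ^ 2 * c ^ k / (2 * 3 ^ k) :=
        div_le_div₀ (by positivity) hpow (by positivity) hfact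
    _ = u ^ 2 / 2 * (c / 3) ^ k := by rw [div_pow]; ring

noncomputable def bernsteinCoeff (M l : ℝ) : ℝ := l ^ 2 / (2 * (1 - l * M / 3))

lemma bernsteinCoeff_nonneg {M l : ℝ} (hlM : l * M < 3) : 0 ≤ bernsteinCoeff M l :=
  div_nonneg (sq_nonneg l) (by linarith)

lemma exp_mul_le_one_add_bernsteinCoeff {M l y : ℝ} (hl : 0 ≤ l) (hlM : l * M < 3)
    (hy : |y| ≤ M) : exp (l * y) ≤ 1 + l * y + bernsteinCoeff M l * y ^ 2 := by
  have hu : |l * y| ≤ l * M := by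
    rw [abs_mul, abs_of_nonneg hl]
    exact mul_le_mul_of_nonneg_left hy hl
  have h := exp_sub_one_sub_le_of_abs_le hu hlM
  have : (l * y) ^ 2 / (2 * (1 - l * M / 3)) = bernsteinCoeff M l * y ^ 2 := by
    rw [bernsteinCoeff]; ring
  linarith

lemma exists_freedman_exponent {M v L : ℝ} (hM : 0 < M) (hv : 0 < v) (hL : 0 < L) :
    ∃ l, 0 < l ∧ l * M < 3 ∧
      bernsteinCoeff M l * v - l * (√(2 * v * L) + 2 / 3 * M * L) ≤ -L := by
  set t := √(2 * v * L) + 2 / 3 * M * L with ht_def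
  have ht : 0 < t := by positivity
  have hD : 0 < v + M * t / 3 := by positivity
  have hroot : 2 * L * (v + M * t / 3) ≤ t ^ 2 := by
    have hs : √(2 * v * L) ^ 2 = 2 * v * L := sq_sqrt (by positivity)
    rw [ht_def]
    nlinarith [mul_nonneg (mul_nonneg hM.le hL.le) (sqrt_nonneg (2 * v * L))]
  refine ⟨t / (v + M * t / 3), by positivity, ?_, ?_⟩
  · rw [div_mul_eq_mul_div, div_lt_iff₀ hD]
    nlinarith
  · have hval : bernsteinCoeff M (t / (v + M * t / 3)) * v - t / (v + M * t / 3) * t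
        = -(t ^ 2 / (2 * (v + M * t / 3))) := by
      have : 1 - t / (v + M * t / 3) * M / 3 = v / (v + M * t / 3) := by
        field_simp; ring
      rw [bernsteinCoeff, this]
      field_simp
      ring
    rw [hval, neg_le_neg_iff, le_div_iff₀ (by positivity)]
    linarith

section Conditional

variable {Ω : Type*} {m m₀ : MeasurableSpace Ω} {P : Measure Ω} [IsFiniteMeasure P]

lemma integrable_exp_mul_of_abs_le {X : Ω → ℝ} {M l : ℝ} (hX : AEStronglyMeasurable X P)
    (hXM : ∀ᵐ ω ∂P, |X ω| ≤ M) (hl : 0 ≤ l) : Integrable (fun ω => exp (l * X ω)) P :=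
  .of_bound (continuous_exp.comp_aestronglyMeasurable (hX.const_mul l)) (exp (l * M)) <| by
    filter_upwards [hXM] with ω h
    rw [norm_of_nonneg (exp_pos _).le, exp_le_exp]
    exact mul_le_mul_of_nonneg_left (abs_le.1 h).2 hl

lemma condExp_exp_mul_le (hm : m ≤ m₀) {X : Ω → ℝ} {M l : ℝ}
    (hX : AEStronglyMeasurable X P) (hXM : ∀ᵐ ω ∂P, |X ω| ≤ M) (hmean : P[X|m] =ᵐ[P] 0)
    (hl : 0 ≤ l) (hlM : l * M < 3) :
    P[fun ω => exp (l * X ω)|m] ≤ᵐ[P]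
      fun ω => exp (bernsteinCoeff M l * P[fun ω => X ω ^ 2|m] ω) := by
  set ψ := bernsteinCoeff M l
  have hX1 : Integrable X P := .of_bound hX M (by simpa using hXM)
  have hX2 : Integrable (fun ω => X ω ^ 2) P := .of_bound (hX.pow 2) (M ^ 2) <| by
    filter_upwards [hXM] with ω h
    simpa using pow_le_pow_left₀ (abs_nonneg _) h 2
  have hquad : Integrable ((fun _ => (1 : ℝ)) + (l • X + ψ • fun ω => X ω ^ 2)) P :=
    (integrable_const 1).add ((hX1.smul l).add (hX2.smul ψ))
  have hpt :
      (fun ω => exp (l * X ω)) ≤ᵐ[P] (fun _ => (1 : ℝ)) + (l • X + ψ • fun ω => X ω ^ 2) := by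
    filter_upwards [hXM] with ω h
    simpa [add_assoc] using exp_mul_le_one_add_bernsteinCoeff hl hlM h
  have hlin : P[(fun _ => (1 : ℝ)) + (l • X + ψ • fun ω => X ω ^ 2)|m]
      =ᵐ[P] fun ω => 1 + ψ * P[fun ω => X ω ^ 2|m] ω := by
    filter_upwards [condExp_add (integrable_const 1) ((hX1.smul l).add (hX2.smul ψ)) m,
      condExp_add (hX1.smul l) (hX2.smul ψ) m, condExp_smul l X m,
      condExp_smul ψ (fun ω => X ω ^ 2) m, hmean] with ω h1 h2 h3 h4 h5
    simp [h1, h2, h3, h4, h5, condExp_const hm]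
  filter_upwards [condExp_mono (integrable_exp_mul_of_abs_le hX hXM hl) hquad hpt, hlin]
    with ω h1 h2
  rw [h2] at h1
  linarith [add_one_le_exp (ψ * P[fun ω => X ω ^ 2|m] ω)]

lemma integral_mul_le_of_condExp_le (hm : m ≤ m₀) {F g h : Ω → ℝ}
    (hF : StronglyMeasurable[m] F) (hF0 : ∀ ω, 0 ≤ F ω) (hg : Integrable g P)
    (hFg : Integrable (F * g) P) (hFh : Integrable (F * h) P) (hgh : P[g|m] ≤ᵐ[P] h) :
    ∫ ω, F ω * g ω ∂P ≤ ∫ ω, F ω * h ω ∂P := calc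
  ∫ ω, F ω * g ω ∂P = ∫ ω, P[F * g|m] ω ∂P := by rw [integral_condExp hm]; rfl
  _ ≤ ∫ ω, F ω * h ω ∂P := by
    refine integral_mono_ae integrable_condExp hFh ?_
    filter_upwards [condExp_mul_of_stronglyMeasurable_left hF hFg hg, hgh] with ω h1 h2
    rw [h1]
    exact mul_le_mul_of_nonneg_left h2 (hF0 ω)

end Conditional

noncomputable def predQuadVar {Ω : Type*} {m : MeasurableSpace Ω} (P : Measure Ω)
    (G : Filtration ℕ m) (x : ℕ → Ω → ℝ) (k : ℕ) (ω : Ω) : ℝ :=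
  ∑ i ∈ Icc 1 k, P[fun ω' => x i ω' ^ 2|G (i - 1)] ω

noncomputable def freedmanProcess {Ω : Type*} {m : MeasurableSpace Ω} (P : Measure Ω)
    (G : Filtration ℕ m) (x : ℕ → Ω → ℝ) (l c : ℝ) (k : ℕ) (ω : Ω) : ℝ :=
  exp (l * ∑ i ∈ Icc 1 k, x i ω - c * predQuadVar P G x k ω)

section Freedman

variable {Ω : Type*} {m : MeasurableSpace Ω} {P : Measure Ω}
  {G : Filtration ℕ m} {x : ℕ → Ω → ℝ} {n : ℕ} {M : ℝ}

lemma predQuadVar_succ (k : ℕ) (ω : Ω) :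
    predQuadVar P G x (k + 1) ω =
      predQuadVar P G x k ω + P[fun ω' => x (k + 1) ω' ^ 2|G k] ω := by
  rw [predQuadVar, predQuadVar, sum_Icc_succ_top (Nat.le_add_left 1 k), Nat.add_sub_cancel]

lemma measurable_predQuadVar {j k : ℕ} (hk : k ≤ j + 1) :
    Measurable[G j] (predQuadVar P G x k) := by
  refine Finset.measurable_sum _ fun i hi => ?_
  exact stronglyMeasurable_condExp.measurable.mono (G.mono (by grind)) le_rfl

lemma predQuadVar_nonneg (k : ℕ) : 0 ≤ᵐ[P] predQuadVar P G x k := by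
  have : ∀ᵐ ω ∂P, ∀ i ∈ Icc 1 k, 0 ≤ P[fun ω' => x i ω' ^ 2|G (i - 1)] ω :=
    (Filter.eventually_all_finset _).2 fun _ _ =>
      condExp_nonneg (ae_of_all _ fun _ => sq_nonneg _)
  filter_upwards [this] with ω h using sum_nonneg h

lemma measurable_sum_Icc (hmeas : ∀ i, 1 ≤ i → i ≤ n → Measurable[G i] (x i)) {k : ℕ}
    (hk : k ≤ n) : Measurable[G k] fun ω => ∑ i ∈ Icc 1 k, x i ω := by
  refine Finset.measurable_sum _ fun i hi => ?_
  rw [mem_Icc] at hi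
  exact (hmeas i hi.1 (hi.2.trans hk)).mono (G.mono hi.2) le_rfl

lemma sum_Icc_le_mul (hbdd : ∀ i, 1 ≤ i → i ≤ n → ∀ᵐ ω ∂P, |x i ω| ≤ M) {k : ℕ}
    (hk : k ≤ n) : ∀ᵐ ω ∂P, ∑ i ∈ Icc 1 k, x i ω ≤ k * M := by
  have : ∀ᵐ ω ∂P, ∀ i ∈ Icc 1 k, |x i ω| ≤ M :=
    (Filter.eventually_all_finset _).2 fun i hi =>
      hbdd i (mem_Icc.1 hi).1 ((mem_Icc.1 hi).2.trans hk)
  filter_upwards [this] with ω h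
  simpa using sum_le_card_nsmul _ _ _ fun i hi => (abs_le.1 (h i hi)).2

lemma integrable_freedmanProcess [IsFiniteMeasure P]
    (hmeas : ∀ i, 1 ≤ i → i ≤ n → Measurable[G i] (x i))
    (hbdd : ∀ i, 1 ≤ i → i ≤ n → ∀ᵐ ω ∂P, |x i ω| ≤ M) {l c : ℝ} (hl : 0 ≤ l) (hc : 0 ≤ c)
    {k : ℕ} (hk : k ≤ n) : Integrable (freedmanProcess P G x l c k) P := by
  have hmeas_k : Measurable (freedmanProcess P G x l c k) :=
    ((((measurable_sum_Icc hmeas hk).mono (G.le k) le_rfl).const_mul l).sub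
      (((measurable_predQuadVar k.le_succ).mono (G.le k) le_rfl).const_mul c)).exp
  refine .of_bound hmeas_k.aestronglyMeasurable (exp (l * (k * M))) ?_
  filter_upwards [sum_Icc_le_mul hbdd hk, predQuadVar_nonneg (P := P) (G := G) (x := x) k]
    with ω hS hV
  rw [freedmanProcess, norm_of_nonneg (exp_pos _).le, exp_le_exp]
  nlinarith [mul_le_mul_of_nonneg_left hS hl, mul_nonneg hc hV]

lemma integral_freedmanProcess_le_one [IsProbabilityMeasure P]
    (hmeas : ∀ i, 1 ≤ i → i ≤ n → Measurable[G i] (x i))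
    (hmean : ∀ i, 1 ≤ i → i ≤ n → P[x i|G (i - 1)] =ᵐ[P] 0)
    (hbdd : ∀ i, 1 ≤ i → i ≤ n → ∀ᵐ ω ∂P, |x i ω| ≤ M) {l : ℝ} (hl : 0 ≤ l)
    (hlM : l * M < 3) {k : ℕ} (hk : k ≤ n) :
    ∫ ω, freedmanProcess P G x l (bernsteinCoeff M l) k ω ∂P ≤ 1 := by
  set ψ := bernsteinCoeff M l
  have hψ : 0 ≤ ψ := bernsteinCoeff_nonneg hlM
  induction k with
  | zero => simp [freedmanProcess, predQuadVar]
  | succ j ih =>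
    have hj : j ≤ n := Nat.le_of_succ_le hk
    have h1 : 1 ≤ j + 1 := Nat.le_add_left 1 j
    set F : Ω → ℝ :=
      fun ω => exp (l * ∑ i ∈ Icc 1 j, x i ω - ψ * predQuadVar P G x (j + 1) ω)
    set g : Ω → ℝ := fun ω => exp (l * x (j + 1) ω)
    set h : Ω → ℝ := fun ω => exp (ψ * P[fun ω' => x (j + 1) ω' ^ 2|G j] ω)
    have hFg : ∀ ω, freedmanProcess P G x l ψ (j + 1) ω = F ω * g ω := fun ω => by
      rw [freedmanProcess, sum_Icc_succ_top h1, ← exp_add]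
      ring_nf
    have hFh : ∀ ω, freedmanProcess P G x l ψ j ω = F ω * h ω := fun ω => by
      rw [freedmanProcess, ← exp_add, predQuadVar_succ]
      ring_nf
    have hF : StronglyMeasurable[G j] F :=
      ((((measurable_sum_Icc hmeas hj).const_mul l).sub
        ((measurable_predQuadVar le_rfl).const_mul ψ)).exp).stronglyMeasurable
    have hx : AEStronglyMeasurable (x (j + 1)) P :=
      ((hmeas (j + 1) h1 hk).mono (G.le _) le_rfl).aestronglyMeasurable
    have hg : Integrable g P := integrable_exp_mul_of_abs_le hx (hbdd _ h1 hk) hl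
    have hgh : P[g|G j] ≤ᵐ[P] h :=
      condExp_exp_mul_le (G.le j) hx (hbdd _ h1 hk) (hmean _ h1 hk) hl hlM
    calc ∫ ω, freedmanProcess P G x l ψ (j + 1) ω ∂P
        = ∫ ω, F ω * g ω ∂P := by simp_rw [hFg]
      _ ≤ ∫ ω, F ω * h ω ∂P :=
        integral_mul_le_of_condExp_le (G.le j) hF (fun _ => (exp_pos _).le) hg
          ((integrable_freedmanProcess hmeas hbdd hl hψ hk).congr (ae_of_all _ hFg))
          ((integrable_freedmanProcess hmeas hbdd hl hψ hj).congr (ae_of_all _ hFh)) hgh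
      _ = ∫ ω, freedmanProcess P G x l ψ j ω ∂P := by simp_rw [hFh]
      _ ≤ 1 := ih hj

lemma measureReal_sum_ge_le_exp [IsProbabilityMeasure P]
    (hmeas : ∀ i, 1 ≤ i → i ≤ n → Measurable[G i] (x i))
    (hmean : ∀ i, 1 ≤ i → i ≤ n → P[x i|G (i - 1)] =ᵐ[P] 0)
    (hbdd : ∀ i, 1 ≤ i → i ≤ n → ∀ᵐ ω ∂P, |x i ω| ≤ M) {v : ℝ}
    (hvar : ∀ᵐ ω ∂P, predQuadVar P G x n ω ≤ v) {l : ℝ} (hl : 0 ≤ l) (hlM : l * M < 3)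
    (t : ℝ) :
    P.real {ω | t ≤ ∑ i ∈ Icc 1 n, x i ω} ≤ exp (bernsteinCoeff M l * v - l * t) := by
  set ψ := bernsteinCoeff M l
  set S : Ω → ℝ := fun ω => ∑ i ∈ Icc 1 n, x i ω
  have hW := integrable_freedmanProcess hmeas hbdd hl (bernsteinCoeff_nonneg hlM) le_rfl
  have hdom : ∀ᵐ ω ∂P, exp (l * S ω) ≤ exp (ψ * v) * freedmanProcess P G x l ψ n ω := by
    filter_upwards [hvar] with ω hω
    rw [freedmanProcess, ← exp_add, exp_le_exp]
    linarith [mul_le_mul_of_nonneg_left hω (bernsteinCoeff_nonneg hlM)]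
  have hint : Integrable (fun ω => exp (l * S ω)) P := by
    refine (hW.const_mul (exp (ψ * v))).mono' ?_ ?_
    · exact (((measurable_sum_Icc hmeas le_rfl).mono (G.le n) le_rfl).const_mul l).exp
        |>.aestronglyMeasurable
    · filter_upwards [hdom] with ω h
      rwa [norm_of_nonneg (exp_pos _).le]
  have hmgf : mgf S P l ≤ exp (ψ * v) := calc
    mgf S P l ≤ ∫ ω, exp (ψ * v) * freedmanProcess P G x l ψ n ω ∂P :=
      integral_mono_ae hint (hW.const_mul _) hdom
    _ = exp (ψ * v) * ∫ ω, freedmanProcess P G x l ψ n ω ∂P := integral_const_mul _ _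
    _ ≤ exp (ψ * v) := mul_le_of_le_one_right (exp_pos _).le
      (integral_freedmanProcess_le_one hmeas hmean hbdd hl hlM le_rfl)
  calc P.real {ω | t ≤ S ω} ≤ exp (-l * t) * mgf S P l :=
        measure_ge_le_exp_mul_mgf t hl hint
    _ ≤ exp (-l * t) * exp (ψ * v) := by gcongr
    _ = exp (ψ * v - l * t) := by rw [← exp_add]; ring_nf

end Freedman

lemma ofReal_one_sub_le_of_measureReal_compl_le {Ω : Type*} {m : MeasurableSpace Ω}
    {P : Measure Ω} [IsProbabilityMeasure P] {s : Set Ω} {δ : ℝ} (h : P.real sᶜ ≤ δ) :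
    ENNReal.ofReal (1 - δ) ≤ P s := by
  rw [← ofReal_measureReal]
  refine ENNReal.ofReal_le_ofReal ?_
  have := measureReal_union_le (μ := P) s sᶜ
  rw [Set.union_compl_self, probReal_univ] at this
  linarith

/-- Freedman's inequality for martingale difference sequences. -/
theorem statement17 {Ω : Type*} {m : MeasurableSpace Ω} (P : Measure Ω) [IsProbabilityMeasure P]
    (G : Filtration ℕ m) (n : ℕ) (x : ℕ → Ω → ℝ) (M v δ : ℝ)
    (hM : 0 < M) (hv : 0 < v) (hδ : 0 < δ)
    (hmeas : ∀ i, 1 ≤ i → i ≤ n → Measurable[G i] (x i))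
    (hmean : ∀ i, 1 ≤ i → i ≤ n → P[x i|G (i - 1)] =ᵐ[P] 0)
    (hbdd : ∀ i, 1 ≤ i → i ≤ n → ∀ᵐ ω ∂P, |x i ω| ≤ M)
    (hvar : ∀ᵐ ω ∂P,
      ∑ i ∈ Finset.Icc 1 n, (P[(fun ω' => x i ω' ^ 2)|G (i - 1)]) ω ≤ v) :
    ENNReal.ofReal (1 - δ) ≤
      P {ω | ∑ i ∈ Finset.Icc 1 n, x i ω ≤
        Real.sqrt (2 * v * Real.log (1 / δ)) + 2 / 3 * M * Real.log (1 / δ)} := by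
  rcases le_or_gt 1 δ with hδ1 | hδ1
  · simp [ENNReal.ofReal_eq_zero.2 (sub_nonpos.2 hδ1)]
  have hL : 0 < log (1 / δ) := log_pos (one_lt_one_div hδ hδ1)
  obtain ⟨l, hl, hlM, hexp⟩ := exists_freedman_exponent hM hv hL
  set t := √(2 * v * log (1 / δ)) + 2 / 3 * M * log (1 / δ)
  refine ofReal_one_sub_le_of_measureReal_compl_le ?_
  calc P.real {ω | ∑ i ∈ Icc 1 n, x i ω ≤ t}ᶜ ≤ P.real {ω | t ≤ ∑ i ∈ Icc 1 n, x i ω} :=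
        measureReal_mono fun _ h => (not_le.1 (Set.notMem_ofPred_iff.1 h)).le
    _ ≤ exp (bernsteinCoeff M l * v - l * t) :=
        measureReal_sum_ge_le_exp hmeas hmean hbdd hvar hl.le hlM t
    _ ≤ exp (-log (1 / δ)) := exp_le_exp.2 hexp
    _ = δ := by rw [one_div, log_inv, neg_neg, exp_log hδ]
end
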